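/- arXiv:1508.03198 — 10 statements merged into one kernel-verified Lean document; each statement's English description precedes it below -/
import Mathlib

section
/- Let X be a connected, non-compact, locally connected, locally compact Hausdorff space and let K ⊆ X be a compact subspace. Then the family of connected components of X∖K contains only finitely many unbounded components (i.e., only finitely many components whose closure in X is not compact). -/
/-!
Choose a compact `L` with `K ∪ {x₀}` inside its interior. Every component `U` of `X \ K` is open
and has its frontier in `K`; since `X` is connected, either `U = X` or that frontier is nonempty,
so in both cases `U` meets `interior L`. If `U` is unbounded it is not contained in `L`, so being
connected it meets the compact set `frontier L ⊆ X \ K`. The components of `X \ K` form an open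
cover of `frontier L`, so only finitely many of them meet it.
-/

open Set

theorem IsPreconnected.inter_frontier_nonempty {X : Type*} [TopologicalSpace X] {s t : Set X}
    (hs : IsPreconnected s) (hst : (s ∩ t).Nonempty) (hs_t : (s \ t).Nonempty) :
    (s ∩ frontier t).Nonempty := by
  by_contra h
  have hsub : s ⊆ interior t ∪ (closure t)ᶜ := fun x hx => by
    by_contra hx'
    simp only [mem_union, mem_compl_iff, not_or, not_not] at hx'
    exact h ⟨x, hx, hx'.2, hx'.1⟩
  have hdisj : Disjoint (interior t) (closure t)ᶜ :=
    disjoint_compl_right.mono_left interior_subset_closure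
  rcases hs.subset_or_subset isOpen_interior isClosed_closure.isOpen_compl hdisj hsub with
    hint | hext
  · obtain ⟨x, hxs, hxt⟩ := hs_t
    exact hxt (interior_subset (hint hxs))
  · obtain ⟨x, hxs, hxt⟩ := hst
    exact hext hxs (subset_closure hxt)

section LocallyConnected

variable {X : Type*} [TopologicalSpace X] [LocallyConnectedSpace X] {F : Set X}

theorem IsOpen.frontier_connectedComponentIn_subset_compl (hF : IsOpen F) (x : X) :
    frontier (connectedComponentIn F x) ⊆ Fᶜ := by
  rw [hF.connectedComponentIn.frontier_eq]
  intro y hy hyF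
  have hyU : y ∈ connectedComponentIn F y := mem_connectedComponentIn hyF
  obtain ⟨z, hzy, hzx⟩ := mem_closure_iff.mp hy.1 _ hF.connectedComponentIn hyU
  have hxy : connectedComponentIn F x = connectedComponentIn F y := by
    rw [connectedComponentIn_eq hzx, connectedComponentIn_eq hzy]
  exact hy.2 (hxy ▸ hyU)

theorem IsOpen.connectedComponentIn_inter_nonempty [PreconnectedSpace X] (hF : IsOpen F)
    {x : X} (hx : x ∈ F) {V : Set X} (hV : IsOpen V) (hFV : Fᶜ ⊆ V) (hV_ne : V.Nonempty) :
    (connectedComponentIn F x ∩ V).Nonempty := by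
  by_cases huniv : connectedComponentIn F x = univ
  · simpa [huniv] using hV_ne
  obtain ⟨y, hy⟩ := nonempty_frontier_iff.mpr ⟨connectedComponentIn_nonempty_iff.mpr hx, huniv⟩
  exact (mem_closure_iff.mp hy.1 V hV
    (hFV (hF.frontier_connectedComponentIn_subset_compl x hy))).mono (inter_comm _ _).subset

theorem IsOpen.finite_image_connectedComponentIn (hF : IsOpen F) {C : Set X} (hC : IsCompact C)
    (hCF : C ⊆ F) : (connectedComponentIn F '' C).Finite := by
  obtain ⟨t, -, ht, hCt⟩ := hC.elim_finite_subcover_image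
    (b := C) (c := connectedComponentIn F) (fun y _ => hF.connectedComponentIn)
    (fun z hz => mem_biUnion hz (mem_connectedComponentIn (hCF hz)))
  refine (ht.image (connectedComponentIn F)).subset ?_
  rintro _ ⟨z, hz, rfl⟩
  obtain ⟨y, hyt, hzy⟩ := mem_iUnion₂.mp (hCt hz)
  exact ⟨y, hyt, connectedComponentIn_eq hzy⟩

end LocallyConnected

theorem finitely_many_unbounded_components_general {X : Type*} [TopologicalSpace X]
    [ConnectedSpace X] [LocallyConnectedSpace X] [LocallyCompactSpace X]
    [T2Space X] {K : Set X} (hK : IsCompact K) :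
    {U : Set X | (∃ x ∈ Kᶜ, U = connectedComponentIn Kᶜ x) ∧ ¬ IsCompact (closure U)}.Finite := by
  obtain ⟨x₀⟩ := (inferInstance : Nonempty X)
  obtain ⟨L, hL, hKL⟩ := exists_compact_superset (hK.union (isCompact_singleton (x := x₀)))
  have hKo : IsOpen Kᶜ := hK.isClosed.isOpen_compl
  have hfL : frontier L ⊆ Kᶜ := fun y hy hyK => hy.2 (hKL (Or.inl hyK))
  refine (hKo.finite_image_connectedComponentIn
    (hL.closure.of_isClosed_subset isClosed_frontier frontier_subset_closure) hfL).subset ?_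
  rintro U ⟨⟨x, hx, rfl⟩, hnc⟩
  have hmeet : (connectedComponentIn Kᶜ x ∩ L).Nonempty :=
    (hKo.connectedComponentIn_inter_nonempty hx isOpen_interior
      (fun y hy => hKL (Or.inl (not_not.mp hy))) ⟨x₀, hKL (Or.inr rfl)⟩).mono
      (inter_subset_inter_right _ interior_subset)
  have hleave : (connectedComponentIn Kᶜ x \ L).Nonempty :=
    sdiff_nonempty.mpr fun hsub => hnc (hL.closure_of_subset hsub)
  obtain ⟨z, hzU, hzL⟩ :=
    isPreconnected_connectedComponentIn.inter_frontier_nonempty hmeet hleave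
  exact ⟨z, hzL, (connectedComponentIn_eq hzU).symm⟩

/-- Let `X` be a connected, non-compact, locally connected, locally compact
Hausdorff space and `K ⊆ X` a compact subspace.  Then among the connected components of
`X \ K` there are only finitely many *unbounded* ones, i.e. components whose closure in `X`
is not compact. -/
theorem finitely_many_unbounded_components {X : Type*} [TopologicalSpace X]
    [ConnectedSpace X] [NoncompactSpace X] [LocallyConnectedSpace X] [LocallyCompactSpace X]
    [T2Space X] {K : Set X} (hK : IsCompact K) :
    {U : Set X | (∃ x ∈ Kᶜ, U = connectedComponentIn Kᶜ x) ∧ ¬ IsCompact (closure U)}.Finite :=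
  finitely_many_unbounded_components_general hK
end

section
/- If max{ max_{j=1,…,m} sup_{x∈K_j}|s_j(x)|, max_{i=1,…,n} sup_{x∈V_i}|t_i(x)| } < 1, then the affine RB operator Φ(p)(q)(s)(t) is a contraction on B(X,Y), and its unique fixed point f satisfies the self-referential equations f(b_j(x)) = p_j(x) + s_j(x)·f(x) for all x ∈ K_j (j = 1,…,m) and f(u_i(x)) = q_i(x) + t_i(x)·f(x) for all x ∈ V_i (i = 1,…,n). -/
open Bornology BoundedContinuousFunction

/-- If `max{max_j sup_{K_j}|s_j|, max_i sup_{V_i}|t_i|} < 1` (expressed via a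
common bound `σ < 1`), then the affine RB operator `Φ(p)(q)(s)(t)` is a contraction on
`B(X,Y)` and its unique bounded fixed point satisfies the self-referential equations
`f (b j x) = p j x + s j x • f x` on `K j` and `f (u i x) = q i x + t i x • f x` on `V i`. -/
theorem affine_RB_operator_contraction_and_fixed_point {X Y : Type*} [Nonempty X]
    [NormedAddCommGroup Y] [NormedSpace ℝ Y] [CompleteSpace Y]
    {m n : ℕ} (K : Set X) (Kj : Fin m → Set X) (V : Fin n → Set X)
    (b : Fin m → X → X) (u : Fin n → X → X)
    (hbinj : ∀ j, Set.InjOn (b j) (Kj j)) (huinj : ∀ i, Set.InjOn (u i) (V i))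
    (hKcov : (⋃ j, b j '' Kj j) = K)
    (hVcov : (⋃ i, u i '' V i) = Set.univ \ K)
    (hdisj : Pairwise (Function.onFun Disjoint
      (Sum.elim (fun j : Fin m => b j '' Kj j) (fun i : Fin n => u i '' V i))))
    (P : Fin m → X → Y) (Q : Fin n → X → Y) (S : Fin m → X → ℝ) (T : Fin n → X → ℝ)
    (hP : ∀ j, IsBounded (P j '' Kj j)) (hQ : ∀ i, IsBounded (Q i '' V i))
    (σ : ℝ) (hσ0 : 0 ≤ σ) (hσ : σ < 1)
    (hS : ∀ j, ∀ x ∈ Kj j, |S j x| ≤ σ) (hT : ∀ i, ∀ x ∈ V i, |T i x| ≤ σ)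
    (Φ : (X → Y) → (X → Y))
    (hΦb : ∀ f : X → Y, ∀ j, ∀ x ∈ Kj j, Φ f (b j x) = P j x + S j x • f x)
    (hΦu : ∀ f : X → Y, ∀ i, ∀ x ∈ V i, Φ f (u i x) = Q i x + T i x • f x) :
    (∀ f g : X → Y, IsBounded (Set.range f) → IsBounded (Set.range g) →
      (⨆ x, ‖Φ f x - Φ g x‖) ≤ σ * ⨆ x, ‖f x - g x‖) ∧
    (∃! f : X → Y, IsBounded (Set.range f) ∧ Φ f = f) ∧
    (∀ f : X → Y, IsBounded (Set.range f) → Φ f = f →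
      (∀ j, ∀ x ∈ Kj j, f (b j x) = P j x + S j x • f x) ∧
      (∀ i, ∀ x ∈ V i, f (u i x) = Q i x + T i x • f x)) := by
  classical
  -- every point of X is in the image of some b j or u i
  have cover : ∀ x : X, (∃ j, ∃ x' ∈ Kj j, b j x' = x) ∨ (∃ i, ∃ x' ∈ V i, u i x' = x) := by
    intro x
    by_cases hx : x ∈ K
    · rw [← hKcov] at hx
      simp only [Set.mem_iUnion, Set.mem_image] at hx
      obtain ⟨j, x', hx', hxx⟩ := hx
      exact Or.inl ⟨j, x', hx', hxx⟩
    · have hx' : x ∈ Set.univ \ K := ⟨trivial, hx⟩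
      rw [← hVcov] at hx'
      simp only [Set.mem_iUnion, Set.mem_image] at hx'
      obtain ⟨i, x', hxi, hxx⟩ := hx'
      exact Or.inr ⟨i, x', hxi, hxx⟩
  -- pointwise Lipschitz estimate
  have key : ∀ (f g : X → Y) (C : ℝ), (∀ y, ‖f y - g y‖ ≤ C) →
      ∀ x, ‖Φ f x - Φ g x‖ ≤ σ * C := by
    intro f g C hfg x
    rcases cover x with ⟨j, x', hx', rfl⟩ | ⟨i, x', hx', rfl⟩
    · rw [hΦb f j x' hx', hΦb g j x' hx']
      rw [add_sub_add_left_eq_sub, ← smul_sub, norm_smul, Real.norm_eq_abs]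
      exact mul_le_mul (hS j x' hx') (hfg x') (norm_nonneg _) hσ0
    · rw [hΦu f i x' hx', hΦu g i x' hx']
      rw [add_sub_add_left_eq_sub, ← smul_sub, norm_smul, Real.norm_eq_abs]
      exact mul_le_mul (hT i x' hx') (hfg x') (norm_nonneg _) hσ0
  -- a common bound for the P's and Q's
  have hPb : ∀ j, ∃ C, ∀ x ∈ Kj j, ‖P j x‖ ≤ C := by
    intro j
    obtain ⟨C, hC⟩ := isBounded_iff_forall_norm_le.mp (hP j)
    exact ⟨C, fun x hx => hC _ ⟨x, hx, rfl⟩⟩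
  have hQb : ∀ i, ∃ C, ∀ x ∈ V i, ‖Q i x‖ ≤ C := by
    intro i
    obtain ⟨C, hC⟩ := isBounded_iff_forall_norm_le.mp (hQ i)
    exact ⟨C, fun x hx => hC _ ⟨x, hx, rfl⟩⟩
  choose CP hCP using hPb
  choose CQ hCQ using hQb
  obtain ⟨M1, hM1⟩ := Finite.exists_le CP
  obtain ⟨M2, hM2⟩ := Finite.exists_le CQ
  set M : ℝ := max (max M1 M2) 0 with hMdef
  have hM0 : 0 ≤ M := le_max_right _ _
  have hMP : ∀ j, ∀ x ∈ Kj j, ‖P j x‖ ≤ M := fun j x hx =>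
    (hCP j x hx).trans ((hM1 j).trans ((le_max_left _ _).trans (le_max_left _ _)))
  have hMQ : ∀ i, ∀ x ∈ V i, ‖Q i x‖ ≤ M := fun i x hx =>
    (hCQ i x hx).trans ((hM2 i).trans ((le_max_right _ _).trans (le_max_left _ _)))
  -- boundedness of Φ f
  have hΦbd : ∀ (f : X → Y) (C : ℝ), (∀ y, ‖f y‖ ≤ C) → ∀ x, ‖Φ f x‖ ≤ M + σ * C := by
    intro f C hf x
    rcases cover x with ⟨j, x', hx', rfl⟩ | ⟨i, x', hx', rfl⟩
    · rw [hΦb f j x' hx']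
      refine (norm_add_le _ _).trans (add_le_add (hMP j x' hx') ?_)
      rw [norm_smul, Real.norm_eq_abs]
      exact mul_le_mul (hS j x' hx') (hf x') (norm_nonneg _) hσ0
    · rw [hΦu f i x' hx']
      refine (norm_add_le _ _).trans (add_le_add (hMQ i x' hx') ?_)
      rw [norm_smul, Real.norm_eq_abs]
      exact mul_le_mul (hT i x' hx') (hf x') (norm_nonneg _) hσ0
  -- set up bounded (continuous w.r.t. discrete topology) functions
  letI : TopologicalSpace X := ⊥
  haveI : DiscreteTopology X := ⟨rfl⟩
  -- lift Φ to an operator on BoundedContinuousFunction X Y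
  have hcont : ∀ f : X → Y, Continuous f := fun f => continuous_of_discreteTopology
  let Φ' : (BoundedContinuousFunction X Y) → (BoundedContinuousFunction X Y) := fun f =>
    BoundedContinuousFunction.mkOfBound ⟨Φ f, hcont _⟩ (2 * (M + σ * ‖f‖))
      (fun x y => by
        have h1 := hΦbd f ‖f‖ f.norm_coe_le_norm x
        have h2 := hΦbd f ‖f‖ f.norm_coe_le_norm y
        calc dist (Φ f x) (Φ f y) ≤ ‖Φ f x‖ + ‖Φ f y‖ := dist_le_norm_add_norm _ _
        _ ≤ (M + σ * ‖f‖) + (M + σ * ‖f‖) := add_le_add h1 h2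
        _ = 2 * (M + σ * ‖f‖) := by ring)
  have hΦ'coe : ∀ f : BoundedContinuousFunction X Y, ⇑(Φ' f) = Φ ⇑f := fun f => rfl
  have hlip : LipschitzWith ⟨σ, hσ0⟩ Φ' := by
    apply LipschitzWith.of_dist_le_mul
    intro f g
    have h0 : (0:ℝ) ≤ σ * dist f g := mul_nonneg hσ0 dist_nonneg
    show dist (Φ' f) (Φ' g) ≤ σ * dist f g
    rw [BoundedContinuousFunction.dist_le h0]
    intro x
    rw [hΦ'coe, hΦ'coe, dist_eq_norm]
    exact key f g (dist f g)
      (fun y => by rw [← dist_eq_norm]; exact BoundedContinuousFunction.dist_coe_le_dist y) x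
  have hcontr : ContractingWith ⟨σ, hσ0⟩ Φ' := ⟨by exact_mod_cast hσ, hlip⟩
  -- the fixed point
  let g₀ : BoundedContinuousFunction X Y := hcontr.fixedPoint Φ'
  have hg₀ : Φ ⇑g₀ = ⇑g₀ := by
    have := hcontr.fixedPoint_isFixedPt
    rw [← hΦ'coe]
    exact congrArg _ this
  -- a bounded fixed point of Φ equals g₀
  have huniq : ∀ f : X → Y, IsBounded (Set.range f) → Φ f = f → f = ⇑g₀ := by
    intro f hfb hff
    obtain ⟨C, hC⟩ := isBounded_iff_forall_norm_le.mp hfb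
    have hC' : ∀ x, ‖f x‖ ≤ C := fun x => hC _ ⟨x, rfl⟩
    let f' : BoundedContinuousFunction X Y := BoundedContinuousFunction.mkOfBound ⟨f, hcont _⟩ (2 * C)
      (fun x y => by
        calc dist (f x) (f y) ≤ ‖f x‖ + ‖f y‖ := dist_le_norm_add_norm _ _
        _ ≤ C + C := add_le_add (hC' x) (hC' y)
        _ = 2 * C := by ring)
    have hf'fix : Function.IsFixedPt Φ' f' := by
      apply BoundedContinuousFunction.ext
      intro x
      show Φ f x = f x
      rw [hff]
    have : f' = g₀ := hcontr.fixedPoint_unique hf'fix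
    funext x
    show f' x = g₀ x
    rw [this]
  refine ⟨?_, ⟨⇑g₀, ⟨g₀.isBounded_range, hg₀⟩, fun f ⟨hfb, hff⟩ => huniq f hfb hff⟩, ?_⟩
  · -- the contraction estimate with sup norms
    intro f g hf hg
    obtain ⟨Cf, hCf⟩ := isBounded_iff_forall_norm_le.mp hf
    obtain ⟨Cg, hCg⟩ := isBounded_iff_forall_norm_le.mp hg
    have hbdd : BddAbove (Set.range fun x => ‖f x - g x‖) := by
      refine ⟨Cf + Cg, ?_⟩
      rintro _ ⟨x, rfl⟩
      exact (norm_sub_le _ _).trans (add_le_add (hCf _ ⟨x, rfl⟩) (hCg _ ⟨x, rfl⟩))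
    have hle : ∀ y, ‖f y - g y‖ ≤ ⨆ x, ‖f x - g x‖ := fun y => le_ciSup hbdd y
    exact ciSup_le fun x => key f g _ hle x
  · -- self-referential equations
    intro f hfb hff
    constructor
    · intro j x hx
      rw [← hff, hΦb f j x hx, hff]
    · intro i x hx
      rw [← hff, hΦu f i x hx, hff]
end

section
/- Fix bounded functions s_j : K_j → ℝ and t_i : V_i → ℝ with max{ max_j sup_{K_j}|s_j|, max_i sup_{V_i}|t_i| } < 1, and let Θ : (×_{j=1}^m B(K_j,Y)) × (×_{i=1}^n B(V_i,Y)) → B(X,Y) send (p,q) = ((p_1,…,p_m),(q_1,…,q_n)) to the unique fixed point f(p,q) of the affine RB operator Φ(p)(q)(s)(t). Then Θ is linear: for all scalars α, β ∈ ℝ and all tuples (p,q), (p̃,q̃), one has f(α(p,q) + β(p̃,q̃)) = α f(p,q) + β f(p̃,q̃). -/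
/-!
The recursion defining the fixed point is affine in the data `(P, Q)`, so `α f(P,Q) + β f(P',Q')`
is a bounded fixed point for the data `α (P,Q) + β (P',Q')`. Two bounded fixed points for the same
data differ by a bounded `h` with `h (b_j x) = s_j(x) h(x)` and `h (u_i x) = t_i(x) h(x)`; since
every point is of one of these forms, `sup ‖h‖ ≤ σ sup ‖h‖` with `σ < 1`, so `h = 0`.
-/

open Bornology

theorem eq_of_forall_exists_norm_sub_le_mul {X E : Type*} [NormedAddCommGroup E] {f g : X → E}
    (hf : IsBounded (Set.range f)) (hg : IsBounded (Set.range g)) {σ : ℝ} (hσ : σ < 1)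
    (hfg : ∀ y, ∃ x, ‖f y - g y‖ ≤ σ * ‖f x - g x‖) : f = g := by
  set τ := max σ 0
  obtain ⟨C, hC⟩ := isBounded_iff_forall_norm_le.mp (hf.sub hg)
  have hbdd : BddAbove (Set.range fun y => ‖f y - g y‖) :=
    ⟨C, by rintro _ ⟨y, rfl⟩; exact hC _ (Set.sub_mem_sub ⟨y, rfl⟩ ⟨y, rfl⟩)⟩
  set M := ⨆ y, ‖f y - g y‖
  have hM0 : 0 ≤ M := Real.iSup_nonneg fun y => norm_nonneg _
  have hM : M ≤ τ * M := by
    refine Real.iSup_le (fun y => ?_) (by positivity)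
    obtain ⟨x, hx⟩ := hfg y
    calc ‖f y - g y‖ ≤ σ * ‖f x - g x‖ := hx
      _ ≤ τ * M :=
        mul_le_mul (le_max_left σ 0) (le_ciSup hbdd x) (norm_nonneg _) (le_max_right σ 0)
  have hτ : τ < 1 := max_lt hσ one_pos
  funext y
  refine sub_eq_zero.mp (norm_le_zero_iff.mp ((le_ciSup hbdd y).trans ?_))
  nlinarith

theorem Bornology.IsBounded.image_linear_comb {X E : Type*} [SeminormedAddCommGroup E]
    [NormedSpace ℝ E] {f g : X → E} {s : Set X} (hf : IsBounded (f '' s))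
    (hg : IsBounded (g '' s)) (a b : ℝ) : IsBounded ((fun x => a • f x + b • g x) '' s) :=
  ((hf.smul₀ a).add (hg.smul₀ b)).subset <| by
    rintro _ ⟨x, hx, rfl⟩
    exact Set.add_mem_add (Set.smul_mem_smul_set ⟨x, hx, rfl⟩)
      (Set.smul_mem_smul_set ⟨x, hx, rfl⟩)

section AffineRecursion

variable {ι X : Type*} {b : ι → X → X} {D : ι → Set X} {S : ι → X → ℝ}

def SatisfiesAffineRecursion {Y : Type*} [Add Y] [SMul ℝ Y] (b : ι → X → X)
    (D : ι → Set X) (S : ι → X → ℝ) (P : ι → X → Y) (f : X → Y) : Prop :=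
  ∀ j, ∀ x ∈ D j, f (b j x) = P j x + S j x • f x

theorem SatisfiesAffineRecursion.linear_comb {Y : Type*} [AddCommGroup Y] [Module ℝ Y]
    {P P' : ι → X → Y} {f g : X → Y}
    (hf : SatisfiesAffineRecursion b D S P f) (hg : SatisfiesAffineRecursion b D S P' g)
    (α β : ℝ) :
    SatisfiesAffineRecursion b D S (fun j x => α • P j x + β • P' j x)
      (fun x => α • f x + β • g x) := by
  intro j x hx
  dsimp only
  rw [hf j x hx, hg j x hx]
  module

theorem SatisfiesAffineRecursion.exists_norm_sub_le {Y : Type*} [SeminormedAddCommGroup Y]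
    [NormedSpace ℝ Y] {P : ι → X → Y} {f g : X → Y}
    (hf : SatisfiesAffineRecursion b D S P f) (hg : SatisfiesAffineRecursion b D S P g)
    {σ : ℝ} (hS : ∀ j, ∀ x ∈ D j, |S j x| ≤ σ) :
    ∀ y ∈ ⋃ j, b j '' D j, ∃ x, ‖f y - g y‖ ≤ σ * ‖f x - g x‖ := by
  simp only [Set.mem_iUnion, Set.mem_image]
  rintro _ ⟨j, x, hx, rfl⟩
  refine ⟨x, ?_⟩
  rw [hf j x hx, hg j x hx, add_sub_add_left_eq_sub, ← smul_sub, norm_smul, Real.norm_eq_abs]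
  gcongr
  exact hS j x hx

end AffineRecursion

theorem affine_RB_fixed_point_linear_general {X Y : Type*}
    [NormedAddCommGroup Y] [NormedSpace ℝ Y]
    {m n : ℕ} (K : Set X) (Kj : Fin m → Set X) (V : Fin n → Set X)
    (b : Fin m → X → X) (u : Fin n → X → X)
    (hKcov : (⋃ j, b j '' Kj j) = K)
    (hVcov : (⋃ i, u i '' V i) = Set.univ \ K)
    (S : Fin m → X → ℝ) (T : Fin n → X → ℝ)
    (σ : ℝ) (hσ : σ < 1)
    (hS : ∀ j, ∀ x ∈ Kj j, |S j x| ≤ σ) (hT : ∀ i, ∀ x ∈ V i, |T i x| ≤ σ)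
    -- `F P Q` is the unique bounded fixed point of the affine RB operator `Φ(P)(Q)(S)(T)`
    (F : (Fin m → X → Y) → (Fin n → X → Y) → (X → Y))
    (hF : ∀ (P : Fin m → X → Y) (Q : Fin n → X → Y),
      (∀ j, IsBounded (P j '' Kj j)) → (∀ i, IsBounded (Q i '' V i)) →
      IsBounded (Set.range (F P Q)) ∧
      (∀ j, ∀ x ∈ Kj j, F P Q (b j x) = P j x + S j x • F P Q x) ∧
      (∀ i, ∀ x ∈ V i, F P Q (u i x) = Q i x + T i x • F P Q x))
    (α β : ℝ) (P P' : Fin m → X → Y) (Q Q' : Fin n → X → Y)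
    (hP : ∀ j, IsBounded (P j '' Kj j)) (hP' : ∀ j, IsBounded (P' j '' Kj j))
    (hQ : ∀ i, IsBounded (Q i '' V i)) (hQ' : ∀ i, IsBounded (Q' i '' V i)) :
    F (fun j x => α • P j x + β • P' j x) (fun i x => α • Q i x + β • Q' i x)
      = fun x => α • F P Q x + β • F P' Q' x := by
  obtain ⟨hbdd, hrecb, hrecu⟩ := hF _ _ (fun j => (hP j).image_linear_comb (hP' j) α β)
    (fun i => (hQ i).image_linear_comb (hQ' i) α β)
  obtain ⟨hbdd₁, hrecb₁, hrecu₁⟩ := hF P Q hP hQ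
  obtain ⟨hbdd₂, hrecb₂, hrecu₂⟩ := hF P' Q' hP' hQ'
  have hbdd_comb : IsBounded (Set.range fun x => α • F P Q x + β • F P' Q' x) := by
    rw [← Set.image_univ] at hbdd₁ hbdd₂ ⊢
    exact hbdd₁.image_linear_comb hbdd₂ α β
  refine eq_of_forall_exists_norm_sub_le_mul hbdd hbdd_comb hσ fun y => ?_
  by_cases hy : y ∈ K
  · exact SatisfiesAffineRecursion.exists_norm_sub_le hrecb
      (SatisfiesAffineRecursion.linear_comb hrecb₁ hrecb₂ α β) hS y (hKcov ▸ hy)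
  · exact SatisfiesAffineRecursion.exists_norm_sub_le hrecu
      (SatisfiesAffineRecursion.linear_comb hrecu₁ hrecu₂ α β) hT y
      (hVcov ▸ ⟨trivial, hy⟩)

/-- With fixed `s`, `t` whose sup norms are bounded by a common `σ < 1`,
the map `Θ : (p, q) ↦ f(p,q)` sending the tuples of bounded functions to the unique bounded
fixed point of the affine RB operator is linear:
`f(α(p,q) + β(p̃,q̃)) = α f(p,q) + β f(p̃,q̃)`. -/
theorem affine_RB_fixed_point_linear {X Y : Type*} [Nonempty X]
    [NormedAddCommGroup Y] [NormedSpace ℝ Y] [CompleteSpace Y]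
    {m n : ℕ} (K : Set X) (Kj : Fin m → Set X) (V : Fin n → Set X)
    (b : Fin m → X → X) (u : Fin n → X → X)
    (hbinj : ∀ j, Set.InjOn (b j) (Kj j)) (huinj : ∀ i, Set.InjOn (u i) (V i))
    (hKcov : (⋃ j, b j '' Kj j) = K)
    (hVcov : (⋃ i, u i '' V i) = Set.univ \ K)
    (hdisj : Pairwise (Function.onFun Disjoint
      (Sum.elim (fun j : Fin m => b j '' Kj j) (fun i : Fin n => u i '' V i))))
    (S : Fin m → X → ℝ) (T : Fin n → X → ℝ)
    (σ : ℝ) (hσ0 : 0 ≤ σ) (hσ : σ < 1)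
    (hS : ∀ j, ∀ x ∈ Kj j, |S j x| ≤ σ) (hT : ∀ i, ∀ x ∈ V i, |T i x| ≤ σ)
    -- `F P Q` is the unique bounded fixed point of the affine RB operator `Φ(P)(Q)(S)(T)`
    (F : (Fin m → X → Y) → (Fin n → X → Y) → (X → Y))
    (hF : ∀ (P : Fin m → X → Y) (Q : Fin n → X → Y),
      (∀ j, IsBounded (P j '' Kj j)) → (∀ i, IsBounded (Q i '' V i)) →
      IsBounded (Set.range (F P Q)) ∧
      (∀ j, ∀ x ∈ Kj j, F P Q (b j x) = P j x + S j x • F P Q x) ∧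
      (∀ i, ∀ x ∈ V i, F P Q (u i x) = Q i x + T i x • F P Q x))
    (α β : ℝ) (P P' : Fin m → X → Y) (Q Q' : Fin n → X → Y)
    (hP : ∀ j, IsBounded (P j '' Kj j)) (hP' : ∀ j, IsBounded (P' j '' Kj j))
    (hQ : ∀ i, IsBounded (Q i '' V i)) (hQ' : ∀ i, IsBounded (Q' i '' V i)) :
    F (fun j x => α • P j x + β • P' j x) (fun i x => α • Q i x + β • Q' i x)
      = fun x => α • F P Q x + β • F P' Q' x :=
  affine_RB_fixed_point_linear_general K Kj V b u hKcov hVcov S T σ hσ hS hT F hF α β P P' Q Q' hP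
    hP' hQ hQ'
end

section
/- Fix bounded functions s_j : K_j → ℝ and t_i : V_i → ℝ with max{ max_j sup_{K_j}|s_j|, max_i sup_{V_i}|t_i| } < 1, and let Θ : (×_{j=1}^m B(K_j,Y)) × (×_{i=1}^n B(V_i,Y)) → B(X,Y) send (p,q) to the unique fixed point f(p,q) of the affine RB operator Φ(p)(q)(s)(t). Then Θ is a bijection: it is injective (f(p,q) = f(p̃,q̃) implies (p,q) = (p̃,q̃)), and for every f ∈ B(X,Y), setting p_j := f∘b_j − s_j·(f restricted to K_j) and q_i := f∘u_i − t_i·(f restricted to V_i) gives Θ(p,q) = f. -/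
/-!
Injectivity is read off the fixed-point equations: on `b j '' Kj j` both fixed points give
`P j x + S j x • F x = P' j x + S j x • F x`, and likewise on the `u i '' V i`.

For surjectivity, with `P`, `Q` built from `f`, the difference `h := F P Q - f` solves the
homogeneous equations `h (b j y) = S j y • h y` and `h (u i y) = T i y • h y`. As the images of
the `b j` and `u i` cover `X`, every value of `h` is a multiple by a factor of modulus at most
`σ` of another value, so `sup ‖h‖ ≤ σ · sup ‖h‖` and `h = 0` because `σ < 1`.
-/

open Bornology

section

variable {X E : Type*} [NormedAddCommGroup E] [NormedSpace ℝ E]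

theorem eq_zero_of_forall_exists_eq_smul {h : X → E} (hh : IsBounded (Set.range h))
    {σ : ℝ} (hσ0 : 0 ≤ σ) (hσ : σ < 1)
    (hself : ∀ x, ∃ y, ∃ c : ℝ, |c| ≤ σ ∧ h x = c • h y) : h = 0 := by
  obtain ⟨R, -, hR⟩ := hh.exists_pos_norm_le
  have hbdd : BddAbove (Set.range fun x => ‖h x‖) := ⟨R, by rintro _ ⟨x, rfl⟩; exact hR _ ⟨x, rfl⟩⟩
  set d := ⨆ x, ‖h x‖
  have hd0 : 0 ≤ d := Real.iSup_nonneg fun x => norm_nonneg (h x)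
  have hcontr : ∀ x, ‖h x‖ ≤ σ * d := fun x => by
    obtain ⟨y, c, hc, hxy⟩ := hself x
    calc ‖h x‖ = |c| * ‖h y‖ := by rw [hxy, norm_smul, Real.norm_eq_abs]
      _ ≤ σ * d := mul_le_mul hc (le_ciSup hbdd y) (norm_nonneg _) hσ0
  have hd : d ≤ 0 := by
    have : d ≤ σ * d := Real.iSup_le hcontr (mul_nonneg hσ0 hd0)
    nlinarith
  funext x
  exact norm_le_zero_iff.mp ((hcontr x).trans (by nlinarith))

theorem isBounded_image_comp_sub_smul {f : X → E} (hf : IsBounded (Set.range f)) (g : X → X)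
    {c : X → ℝ} {s : Set X} {σ : ℝ} (hc : ∀ x ∈ s, |c x| ≤ σ) :
    IsBounded ((fun x => f (g x) - c x • f x) '' s) := by
  obtain ⟨R, -, hR⟩ := hf.exists_pos_norm_le
  refine isBounded_iff_forall_norm_le.mpr ⟨R + σ * R, ?_⟩
  rintro _ ⟨x, hx, rfl⟩
  calc ‖f (g x) - c x • f x‖ ≤ ‖f (g x)‖ + |c x| * ‖f x‖ := by
        rw [← Real.norm_eq_abs, ← norm_smul]; exact norm_sub_le _ _
    _ ≤ R + σ * R := add_le_add (hR _ ⟨g x, rfl⟩)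
        (mul_le_mul (hc x hx) (hR _ ⟨x, rfl⟩) (norm_nonneg _) ((abs_nonneg _).trans (hc x hx)))

theorem sub_apply_eq_smul_of_eq_sub_smul_add_smul {g f : X → E} {a y : X} {c : ℝ}
    (h : g a = (f a - c • f y) + c • g y) : (g - f) a = c • (g - f) y := by
  simp only [Pi.sub_apply, h]
  module

end

theorem affine_RB_fixed_point_bijective_general {X Y : Type*}
    [NormedAddCommGroup Y] [NormedSpace ℝ Y]
    {m n : ℕ} (K : Set X) (Kj : Fin m → Set X) (V : Fin n → Set X)
    (b : Fin m → X → X) (u : Fin n → X → X)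
    (hKcov : (⋃ j, b j '' Kj j) = K)
    (hVcov : (⋃ i, u i '' V i) = Set.univ \ K)
    (S : Fin m → X → ℝ) (T : Fin n → X → ℝ)
    (σ : ℝ) (hσ0 : 0 ≤ σ) (hσ : σ < 1)
    (hS : ∀ j, ∀ x ∈ Kj j, |S j x| ≤ σ) (hT : ∀ i, ∀ x ∈ V i, |T i x| ≤ σ)
    -- `F P Q` is the unique bounded fixed point of the affine RB operator `Φ(P)(Q)(S)(T)`
    (F : (Fin m → X → Y) → (Fin n → X → Y) → (X → Y))
    (hF : ∀ (P : Fin m → X → Y) (Q : Fin n → X → Y),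
      (∀ j, IsBounded (P j '' Kj j)) → (∀ i, IsBounded (Q i '' V i)) →
      IsBounded (Set.range (F P Q)) ∧
      (∀ j, ∀ x ∈ Kj j, F P Q (b j x) = P j x + S j x • F P Q x) ∧
      (∀ i, ∀ x ∈ V i, F P Q (u i x) = Q i x + T i x • F P Q x)) :
    (∀ (P P' : Fin m → X → Y) (Q Q' : Fin n → X → Y),
      (∀ j, IsBounded (P j '' Kj j)) → (∀ j, IsBounded (P' j '' Kj j)) →
      (∀ i, IsBounded (Q i '' V i)) → (∀ i, IsBounded (Q' i '' V i)) →
      F P Q = F P' Q' →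
      (∀ j, ∀ x ∈ Kj j, P j x = P' j x) ∧ (∀ i, ∀ x ∈ V i, Q i x = Q' i x)) ∧
    (∀ f : X → Y, IsBounded (Set.range f) →
      F (fun j x => f (b j x) - S j x • f x) (fun i x => f (u i x) - T i x • f x) = f) := by
  refine ⟨fun P P' Q Q' hP hP' hQ hQ' heq => ?_, fun f hf => ?_⟩
  · obtain ⟨-, hPF, hQF⟩ := hF P Q hP hQ
    obtain ⟨-, hPF', hQF'⟩ := hF P' Q' hP' hQ'
    rw [heq] at hPF hQF
    exact ⟨fun j x hx => add_right_cancel ((hPF j x hx).symm.trans (hPF' j x hx)),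
      fun i x hx => add_right_cancel ((hQF i x hx).symm.trans (hQF' i x hx))⟩
  obtain ⟨hFb, hPF, hQF⟩ := hF _ _ (fun j => isBounded_image_comp_sub_smul hf (b j) (hS j))
    (fun i => isBounded_image_comp_sub_smul hf (u i) (hT i))
  refine sub_eq_zero.mp (eq_zero_of_forall_exists_eq_smul ?_ hσ0 hσ fun x => ?_)
  · exact (hFb.sub hf).subset (Set.range_subset_iff.mpr fun x => Set.sub_mem_sub ⟨x, rfl⟩ ⟨x, rfl⟩)
  have hx : x ∈ (⋃ j, b j '' Kj j) ∪ ⋃ i, u i '' V i := by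
    rw [hKcov, hVcov, Set.union_sdiff_self]; exact Or.inr trivial
  simp only [Set.mem_union, Set.mem_iUnion, Set.mem_image] at hx
  rcases hx with ⟨j, y, hy, rfl⟩ | ⟨i, y, hy, rfl⟩
  · exact ⟨y, S j y, hS j y hy, sub_apply_eq_smul_of_eq_sub_smul_add_smul (hPF j y hy)⟩
  · exact ⟨y, T i y, hT i y hy, sub_apply_eq_smul_of_eq_sub_smul_add_smul (hQF i y hy)⟩

/-- With fixed `s`, `t` whose sup norms are bounded by a common `σ < 1`,
the map `Θ : (p,q) ↦ f(p,q)` is a bijection: it is injective (equal fixed points force the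
tuples to agree on the sets `K j`, resp. `V i`), and for every bounded `f : X → Y`, setting
`p j := f ∘ b j − s j • f` and `q i := f ∘ u i − t i • f` gives `Θ(p,q) = f`. -/
theorem affine_RB_fixed_point_bijective {X Y : Type*} [Nonempty X]
    [NormedAddCommGroup Y] [NormedSpace ℝ Y] [CompleteSpace Y]
    {m n : ℕ} (K : Set X) (Kj : Fin m → Set X) (V : Fin n → Set X)
    (b : Fin m → X → X) (u : Fin n → X → X)
    (hbinj : ∀ j, Set.InjOn (b j) (Kj j)) (huinj : ∀ i, Set.InjOn (u i) (V i))
    (hKcov : (⋃ j, b j '' Kj j) = K)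
    (hVcov : (⋃ i, u i '' V i) = Set.univ \ K)
    (hdisj : Pairwise (Function.onFun Disjoint
      (Sum.elim (fun j : Fin m => b j '' Kj j) (fun i : Fin n => u i '' V i))))
    (S : Fin m → X → ℝ) (T : Fin n → X → ℝ)
    (σ : ℝ) (hσ0 : 0 ≤ σ) (hσ : σ < 1)
    (hS : ∀ j, ∀ x ∈ Kj j, |S j x| ≤ σ) (hT : ∀ i, ∀ x ∈ V i, |T i x| ≤ σ)
    -- `F P Q` is the unique bounded fixed point of the affine RB operator `Φ(P)(Q)(S)(T)`
    (F : (Fin m → X → Y) → (Fin n → X → Y) → (X → Y))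
    (hF : ∀ (P : Fin m → X → Y) (Q : Fin n → X → Y),
      (∀ j, IsBounded (P j '' Kj j)) → (∀ i, IsBounded (Q i '' V i)) →
      IsBounded (Set.range (F P Q)) ∧
      (∀ j, ∀ x ∈ Kj j, F P Q (b j x) = P j x + S j x • F P Q x) ∧
      (∀ i, ∀ x ∈ V i, F P Q (u i x) = Q i x + T i x • F P Q x)) :
    (∀ (P P' : Fin m → X → Y) (Q Q' : Fin n → X → Y),
      (∀ j, IsBounded (P j '' Kj j)) → (∀ j, IsBounded (P' j '' Kj j)) →
      (∀ i, IsBounded (Q i '' V i)) → (∀ i, IsBounded (Q' i '' V i)) →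
      F P Q = F P' Q' →
      (∀ j, ∀ x ∈ Kj j, P j x = P' j x) ∧ (∀ i, ∀ x ∈ V i, Q i x = Q' i x)) ∧
    (∀ f : X → Y, IsBounded (Set.range f) →
      F (fun j x => f (b j x) - S j x • f x) (fun i x => f (u i x) - T i x • f x) = f) :=
  affine_RB_fixed_point_bijective_general K Kj V b u hKcov hVcov S T σ hσ0 hσ hS hT F hF
end

section
/- Let 1 ≤ p < ∞ and assume the s_j and t_i are essentially bounded. If Σ_{j=1}^m J_{b_j}·‖s_j‖_{L^∞(K_j)}^p + Σ_{i=1}^n J_{u_i}·‖t_i‖_{L^∞(V_i)}^p < 1, then the affine RB operator Φ maps the Bochner–Lebesgue space L^p(X,μ;Y) into itself and is a contraction on L^p(X,μ;Y): ‖Φg − Φh‖_{L^p} ≤ ( Σ_j J_{b_j}‖s_j‖_{L^∞}^p + Σ_i J_{u_i}‖t_i‖_{L^∞}^p )^{1/p} ‖g − h‖_{L^p} for all g,h ∈ L^p(X,μ;Y); hence Φ has a unique fixed point in L^p(X,μ;Y). -/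
open MeasureTheory ENNReal

private lemma rb_cov {X : Type*} [MeasurableSpace X] (μ : Measure X)
    {K : Set X} (hK : MeasurableSet K) {b c : X → X} (hc : Measurable c)
    (hcb : ∀ x ∈ K, c (b x) = x)
    {J : NNReal} (hJ : ∀ A : Set X, MeasurableSet A → A ⊆ K → μ (b '' A) ≤ J * μ A)
    {G : X → ℝ≥0∞} (hG : Measurable G) :
    ∫⁻ x in b '' K, G (c x) ∂μ ≤ J * ∫⁻ y in K, G y ∂μ := by
  have hmap : (μ.restrict (b '' K)).map c ≤ (J : ℝ≥0∞) • μ.restrict K := by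
    refine Measure.le_iff.2 fun A hA => ?_
    rw [Measure.map_apply hc hA, Measure.smul_apply, Measure.restrict_apply hA,
      Measure.restrict_apply (hc hA)]
    have hsub : c ⁻¹' A ∩ b '' K ⊆ b '' (A ∩ K) := by
      rintro x ⟨hxA, y, hyK, rfl⟩
      exact ⟨y, ⟨by rwa [Set.mem_preimage, hcb y hyK] at hxA, hyK⟩, rfl⟩
    calc μ (c ⁻¹' A ∩ b '' K) ≤ μ (b '' (A ∩ K)) := measure_mono hsub
      _ ≤ J * μ (A ∩ K) := hJ _ (hA.inter hK) Set.inter_subset_right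
      _ = (J : ℝ≥0∞) • μ (A ∩ K) := by rw [smul_eq_mul]
  calc ∫⁻ x in b '' K, G (c x) ∂μ = ∫⁻ y, G y ∂((μ.restrict (b '' K)).map c) :=
        (lintegral_map hG hc).symm
    _ ≤ ∫⁻ y, G y ∂((J : ℝ≥0∞) • μ.restrict K) := lintegral_mono' hmap le_rfl
    _ = J * ∫⁻ y in K, G y ∂μ := lintegral_smul_measure _ _

/-- For `1 ≤ p < ∞`, if
`Σ_j J_{b_j} ‖s_j‖_{L^∞(K_j)}^p + Σ_i J_{u_i} ‖t_i‖_{L^∞(V_i)}^p < 1`, the affine RB operator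
`Φ` maps the Bochner–Lebesgue space `L^p(X,μ;Y)` into itself and is a contraction with
constant `(Σ_j J_{b_j}‖s_j‖_∞^p + Σ_i J_{u_i}‖t_i‖_∞^p)^{1/p}`; hence it has a unique fixed
point in `L^p(X,μ;Y)`. -/
theorem affine_RB_contraction_on_Lp {X Y : Type*} [MeasurableSpace X] (μ : Measure X)
    [NormedAddCommGroup Y] [NormedSpace ℝ Y] [CompleteSpace Y]
    {m n : ℕ} (Kj : Fin m → Set X) (V : Fin n → Set X)
    (hKm : ∀ j, MeasurableSet (Kj j)) (hVm : ∀ i, MeasurableSet (V i))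
    (b : Fin m → X → X) (u : Fin n → X → X)
    (hbinj : ∀ j, Set.InjOn (b j) (Kj j)) (huinj : ∀ i, Set.InjOn (u i) (V i))
    (hBm : ∀ j, MeasurableSet (b j '' Kj j)) (hUm : ∀ i, MeasurableSet (u i '' V i))
    -- measurable inverses
    (c : Fin m → X → X) (d : Fin n → X → X)
    (hc : ∀ j, Measurable (c j)) (hd : ∀ i, Measurable (d i))
    (hcb : ∀ j, ∀ x ∈ Kj j, c j (b j x) = x) (hdu : ∀ i, ∀ x ∈ V i, d i (u i x) = x)
    (hcover : ((⋃ j, b j '' Kj j) ∪ ⋃ i, u i '' V i) = Set.univ)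
    (hdisj : Pairwise (Function.onFun Disjoint
      (Sum.elim (fun j : Fin m => b j '' Kj j) (fun i : Fin n => u i '' V i))))
    (Jb : Fin m → NNReal) (Ju : Fin n → NNReal)
    (hJb : ∀ j, ∀ A : Set X, MeasurableSet A → A ⊆ Kj j → μ (b j '' A) ≤ Jb j * μ A)
    (hJu : ∀ i, ∀ A : Set X, MeasurableSet A → A ⊆ V i → μ (u i '' A) ≤ Ju i * μ A)
    (P : Fin m → X → Y) (Q : Fin n → X → Y) (S : Fin m → X → ℝ) (T : Fin n → X → ℝ)
    (hPm : ∀ j, StronglyMeasurable (P j)) (hQm : ∀ i, StronglyMeasurable (Q i))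
    (hSm : ∀ j, Measurable (S j)) (hTm : ∀ i, Measurable (T i))
    (p : ℝ≥0∞) (hp1 : 1 ≤ p) (hptop : p ≠ ⊤)
    (hP : ∀ j, MemLp (P j) p (μ.restrict (Kj j))) (hQ : ∀ i, MemLp (Q i) p (μ.restrict (V i)))
    (hSess : ∀ j, eLpNorm (S j) ⊤ (μ.restrict (Kj j)) ≠ ⊤)
    (hTess : ∀ i, eLpNorm (T i) ⊤ (μ.restrict (V i)) ≠ ⊤)
    (hC : (∑ j, (Jb j : ℝ≥0∞) * eLpNorm (S j) ⊤ (μ.restrict (Kj j)) ^ p.toReal)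
        + (∑ i, (Ju i : ℝ≥0∞) * eLpNorm (T i) ⊤ (μ.restrict (V i)) ^ p.toReal) < 1)
    (Φ : (X → Y) → (X → Y))
    (hΦb : ∀ f : X → Y, ∀ j, ∀ x ∈ Kj j, Φ f (b j x) = P j x + S j x • f x)
    (hΦu : ∀ f : X → Y, ∀ i, ∀ x ∈ V i, Φ f (u i x) = Q i x + T i x • f x) :
    (∀ f : X → Y, StronglyMeasurable f → MemLp f p μ → MemLp (Φ f) p μ) ∧
    (∀ g h : X → Y, StronglyMeasurable g → StronglyMeasurable h →
      MemLp g p μ → MemLp h p μ →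
      eLpNorm (fun x => Φ g x - Φ h x) p μ ≤
        ((∑ j, (Jb j : ℝ≥0∞) * eLpNorm (S j) ⊤ (μ.restrict (Kj j)) ^ p.toReal)
          + (∑ i, (Ju i : ℝ≥0∞) * eLpNorm (T i) ⊤ (μ.restrict (V i)) ^ p.toReal)) ^ (1 / p.toReal)
        * eLpNorm (fun x => g x - h x) p μ) ∧
    (∃ f : X → Y, StronglyMeasurable f ∧ MemLp f p μ ∧ Φ f =ᵐ[μ] f ∧
      ∀ f' : X → Y, StronglyMeasurable f' → MemLp f' p μ → Φ f' =ᵐ[μ] f' → f' =ᵐ[μ] f) := by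
  have hp0 : p ≠ 0 := (lt_of_lt_of_le zero_lt_one hp1).ne'
  have hpt : 0 < p.toReal := ENNReal.toReal_pos hp0 hptop
  set C : ℝ≥0∞ := (∑ j, (Jb j : ℝ≥0∞) * eLpNorm (S j) ⊤ (μ.restrict (Kj j)) ^ p.toReal)
      + (∑ i, (Ju i : ℝ≥0∞) * eLpNorm (T i) ⊤ (μ.restrict (V i)) ^ p.toReal) with hCdef
  set W : Fin m ⊕ Fin n → Set X :=
    Sum.elim (fun j : Fin m => b j '' Kj j) (fun i : Fin n => u i '' V i) with hWdef
  have hWm : ∀ k, MeasurableSet (W k) := by rintro (j | i); exacts [hBm j, hUm i]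
  have hWu : (⋃ k, W k) = Set.univ := by rw [Set.iUnion_sum]; exact hcover
  -- the main integral estimate
  have main : ∀ (w : X → Y) (Gb : Fin m → X → Y) (Gu : Fin n → X → Y),
      (∀ j, StronglyMeasurable (Gb j)) → (∀ i, StronglyMeasurable (Gu i)) →
      (∀ j, ∀ x ∈ Kj j, w (b j x) = Gb j x) → (∀ i, ∀ x ∈ V i, w (u i x) = Gu i x) →
      ∫⁻ x, (‖w x‖₊ : ℝ≥0∞) ^ p.toReal ∂μ ≤
        (∑ j, (Jb j : ℝ≥0∞) * ∫⁻ y in Kj j, (‖Gb j y‖₊ : ℝ≥0∞) ^ p.toReal ∂μ)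
        + ∑ i, (Ju i : ℝ≥0∞) * ∫⁻ y in V i, (‖Gu i y‖₊ : ℝ≥0∞) ^ p.toReal ∂μ := by
    intro w Gb Gu hGbm hGum hwb hwu
    have hsplit : ∫⁻ x, (‖w x‖₊ : ℝ≥0∞) ^ p.toReal ∂μ
        = ∑ k : Fin m ⊕ Fin n, ∫⁻ x in W k, (‖w x‖₊ : ℝ≥0∞) ^ p.toReal ∂μ := by
      rw [← setLIntegral_univ, ← hWu, lintegral_iUnion hWm hdisj, tsum_fintype]
    rw [hsplit, Fintype.sum_sum_type]
    refine add_le_add (Finset.sum_le_sum fun j _ => ?_) (Finset.sum_le_sum fun i _ => ?_)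
    · have heq : ∫⁻ x in W (Sum.inl j), (‖w x‖₊ : ℝ≥0∞) ^ p.toReal ∂μ
          = ∫⁻ x in b j '' Kj j, (‖Gb j (c j x)‖₊ : ℝ≥0∞) ^ p.toReal ∂μ := by
        refine setLIntegral_congr_fun (hBm j) ?_
        rintro x ⟨y, hy, rfl⟩
        dsimp only
        rw [hcb j y hy, hwb j y hy]
      rw [heq]
      exact rb_cov μ (hKm j) (hc j) (hcb j) (hJb j)
        (((hGbm j).enorm).pow_const p.toReal)
    · have heq : ∫⁻ x in W (Sum.inr i), (‖w x‖₊ : ℝ≥0∞) ^ p.toReal ∂μ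
          = ∫⁻ x in u i '' V i, (‖Gu i (d i x)‖₊ : ℝ≥0∞) ^ p.toReal ∂μ := by
        refine setLIntegral_congr_fun (hUm i) ?_
        rintro x ⟨y, hy, rfl⟩
        dsimp only
        rw [hdu i y hy, hwu i y hy]
      rw [heq]
      exact rb_cov μ (hVm i) (hd i) (hdu i) (hJu i)
        (((hGum i).enorm).pow_const p.toReal)
  -- a.e. strong measurability of functions agreeing with nice functions on the pieces
  have aesm : ∀ (w : X → Y) (Gb : Fin m → X → Y) (Gu : Fin n → X → Y),
      (∀ j, StronglyMeasurable (Gb j)) → (∀ i, StronglyMeasurable (Gu i)) →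
      (∀ j, ∀ x ∈ Kj j, w (b j x) = Gb j x) → (∀ i, ∀ x ∈ V i, w (u i x) = Gu i x) →
      AEStronglyMeasurable w μ := by
    intro w Gb Gu hGbm hGum hwb hwu
    have : μ = μ.restrict (⋃ k, W k) := by rw [hWu, Measure.restrict_univ]
    rw [this]
    refine AEStronglyMeasurable.iUnion ?_
    rintro (j | i)
    · refine (((hGbm j).comp_measurable (hc j)).aestronglyMeasurable).congr ?_
      filter_upwards [ae_restrict_mem (hBm j)] with x hx
      obtain ⟨y, hy, rfl⟩ := hx
      rw [Function.comp_apply, hcb j y hy, hwb j y hy]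
    · refine (((hGum i).comp_measurable (hd i)).aestronglyMeasurable).congr ?_
      filter_upwards [ae_restrict_mem (hUm i)] with x hx
      obtain ⟨y, hy, rfl⟩ := hx
      rw [Function.comp_apply, hdu i y hy, hwu i y hy]
  -- Part 1
  have part1 : ∀ f : X → Y, StronglyMeasurable f → MemLp f p μ → MemLp (Φ f) p μ := by
    intro f hf hfL
    set Gb : Fin m → X → Y := fun j y => P j y + S j y • f y with hGb
    set Gu : Fin n → X → Y := fun i y => Q i y + T i y • f y with hGu
    have hGbm : ∀ j, StronglyMeasurable (Gb j) := fun j =>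
      (hPm j).add (((hSm j).stronglyMeasurable).smul hf)
    have hGum : ∀ i, StronglyMeasurable (Gu i) := fun i =>
      (hQm i).add (((hTm i).stronglyMeasurable).smul hf)
    have hwb : ∀ j, ∀ x ∈ Kj j, Φ f (b j x) = Gb j x := fun j x hx => hΦb f j x hx
    have hwu : ∀ i, ∀ x ∈ V i, Φ f (u i x) = Gu i x := fun i x hx => hΦu f i x hx
    refine ⟨aesm (Φ f) Gb Gu hGbm hGum hwb hwu, ?_⟩
    rw [eLpNorm_eq_lintegral_rpow_enorm_toReal hp0 hptop]
    refine ENNReal.rpow_lt_top_of_nonneg (by positivity) ?_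
    refine (lt_of_le_of_lt (main (Φ f) Gb Gu hGbm hGum hwb hwu) ?_).ne
    have hGbL : ∀ j, MemLp (Gb j) p (μ.restrict (Kj j)) := by
      intro j
      have hS : MemLp (S j) ⊤ (μ.restrict (Kj j)) :=
        ⟨(hSm j).aestronglyMeasurable, (hSess j).lt_top⟩
      exact (hP j).add ((hfL.restrict _).smul hS)
    have hGuL : ∀ i, MemLp (Gu i) p (μ.restrict (V i)) := by
      intro i
      have hT : MemLp (T i) ⊤ (μ.restrict (V i)) :=
        ⟨(hTm i).aestronglyMeasurable, (hTess i).lt_top⟩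
      exact (hQ i).add ((hfL.restrict _).smul hT)
    refine ENNReal.add_lt_top.2 ⟨?_, ?_⟩
    · refine ENNReal.sum_lt_top.2 fun j _ => ?_
      exact ENNReal.mul_lt_top ENNReal.coe_lt_top
        (lintegral_rpow_enorm_lt_top_of_eLpNorm_lt_top hp0 hptop (hGbL j).2)
    · refine ENNReal.sum_lt_top.2 fun i _ => ?_
      exact ENNReal.mul_lt_top ENNReal.coe_lt_top
        (lintegral_rpow_enorm_lt_top_of_eLpNorm_lt_top hp0 hptop (hGuL i).2)
  -- Part 2
  have part2 : ∀ g h : X → Y, StronglyMeasurable g → StronglyMeasurable h →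
      MemLp g p μ → MemLp h p μ →
      eLpNorm (fun x => Φ g x - Φ h x) p μ ≤
        C ^ (1 / p.toReal) * eLpNorm (fun x => g x - h x) p μ := by
    intro g h hg hh hgL hhL
    set v : X → Y := fun x => g x - h x with hv
    have hvm : StronglyMeasurable v := hg.sub hh
    set I := ∫⁻ x, (‖v x‖₊ : ℝ≥0∞) ^ p.toReal ∂μ with hI
    set Gb : Fin m → X → Y := fun j y => S j y • v y with hGb
    set Gu : Fin n → X → Y := fun i y => T i y • v y with hGu
    have hGbm : ∀ j, StronglyMeasurable (Gb j) := fun j => ((hSm j).stronglyMeasurable).smul hvm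
    have hGum : ∀ i, StronglyMeasurable (Gu i) := fun i => ((hTm i).stronglyMeasurable).smul hvm
    have hwb : ∀ j, ∀ x ∈ Kj j, (fun x => Φ g x - Φ h x) (b j x) = Gb j x := by
      intro j x hx
      show Φ g (b j x) - Φ h (b j x) = S j x • v x
      rw [hΦb g j x hx, hΦb h j x hx, add_sub_add_left_eq_sub, ← smul_sub]
    have hwu : ∀ i, ∀ x ∈ V i, (fun x => Φ g x - Φ h x) (u i x) = Gu i x := by
      intro i x hx
      show Φ g (u i x) - Φ h (u i x) = T i x • v x
      rw [hΦu g i x hx, hΦu h i x hx, add_sub_add_left_eq_sub, ← smul_sub]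
    have hbound := main (fun x => Φ g x - Φ h x) Gb Gu hGbm hGum hwb hwu
    have hterm : ∀ j, ∫⁻ y in Kj j, (‖Gb j y‖₊ : ℝ≥0∞) ^ p.toReal ∂μ ≤
        eLpNorm (S j) ⊤ (μ.restrict (Kj j)) ^ p.toReal * I := by
      intro j
      have h1 : ∀ᵐ y ∂(μ.restrict (Kj j)), (‖Gb j y‖₊ : ℝ≥0∞) ^ p.toReal ≤
          eLpNorm (S j) ⊤ (μ.restrict (Kj j)) ^ p.toReal * (‖v y‖₊ : ℝ≥0∞) ^ p.toReal := by
        filter_upwards [enorm_ae_le_eLpNormEssSup (S j) (μ.restrict (Kj j))] with y hy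
        have h2 : (‖Gb j y‖₊ : ℝ≥0∞) = (‖S j y‖₊ : ℝ≥0∞) * (‖v y‖₊ : ℝ≥0∞) := by
          show ((‖S j y • v y‖₊ : ℝ≥0∞)) = _
          rw [nnnorm_smul, ENNReal.coe_mul]
        rw [h2, ENNReal.mul_rpow_of_nonneg _ _ hpt.le]
        refine mul_le_mul_left (ENNReal.rpow_le_rpow ?_ hpt.le) _
        rw [eLpNorm_exponent_top]; exact hy
      calc ∫⁻ y in Kj j, (‖Gb j y‖₊ : ℝ≥0∞) ^ p.toReal ∂μ
          ≤ ∫⁻ y in Kj j, eLpNorm (S j) ⊤ (μ.restrict (Kj j)) ^ p.toReal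
              * (‖v y‖₊ : ℝ≥0∞) ^ p.toReal ∂μ := lintegral_mono_ae h1
        _ = eLpNorm (S j) ⊤ (μ.restrict (Kj j)) ^ p.toReal
              * ∫⁻ y in Kj j, (‖v y‖₊ : ℝ≥0∞) ^ p.toReal ∂μ :=
            lintegral_const_mul' _ _ (ENNReal.rpow_ne_top_of_nonneg hpt.le (hSess j))
        _ ≤ eLpNorm (S j) ⊤ (μ.restrict (Kj j)) ^ p.toReal * I :=
            mul_le_mul_right (lintegral_mono' Measure.restrict_le_self le_rfl) _
    have htermu : ∀ i, ∫⁻ y in V i, (‖Gu i y‖₊ : ℝ≥0∞) ^ p.toReal ∂μ ≤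
        eLpNorm (T i) ⊤ (μ.restrict (V i)) ^ p.toReal * I := by
      intro i
      have h1 : ∀ᵐ y ∂(μ.restrict (V i)), (‖Gu i y‖₊ : ℝ≥0∞) ^ p.toReal ≤
          eLpNorm (T i) ⊤ (μ.restrict (V i)) ^ p.toReal * (‖v y‖₊ : ℝ≥0∞) ^ p.toReal := by
        filter_upwards [enorm_ae_le_eLpNormEssSup (T i) (μ.restrict (V i))] with y hy
        have h2 : (‖Gu i y‖₊ : ℝ≥0∞) = (‖T i y‖₊ : ℝ≥0∞) * (‖v y‖₊ : ℝ≥0∞) := by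
          show ((‖T i y • v y‖₊ : ℝ≥0∞)) = _
          rw [nnnorm_smul, ENNReal.coe_mul]
        rw [h2, ENNReal.mul_rpow_of_nonneg _ _ hpt.le]
        refine mul_le_mul_left (ENNReal.rpow_le_rpow ?_ hpt.le) _
        rw [eLpNorm_exponent_top]; exact hy
      calc ∫⁻ y in V i, (‖Gu i y‖₊ : ℝ≥0∞) ^ p.toReal ∂μ
          ≤ ∫⁻ y in V i, eLpNorm (T i) ⊤ (μ.restrict (V i)) ^ p.toReal
              * (‖v y‖₊ : ℝ≥0∞) ^ p.toReal ∂μ := lintegral_mono_ae h1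
        _ = eLpNorm (T i) ⊤ (μ.restrict (V i)) ^ p.toReal
              * ∫⁻ y in V i, (‖v y‖₊ : ℝ≥0∞) ^ p.toReal ∂μ :=
            lintegral_const_mul' _ _ (ENNReal.rpow_ne_top_of_nonneg hpt.le (hTess i))
        _ ≤ eLpNorm (T i) ⊤ (μ.restrict (V i)) ^ p.toReal * I :=
            mul_le_mul_right (lintegral_mono' Measure.restrict_le_self le_rfl) _
    have htotal : ∫⁻ x, (‖Φ g x - Φ h x‖₊ : ℝ≥0∞) ^ p.toReal ∂μ ≤ C * I := by
      refine hbound.trans ?_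
      rw [hCdef, add_mul, Finset.sum_mul, Finset.sum_mul]
      refine add_le_add (Finset.sum_le_sum fun j _ => ?_) (Finset.sum_le_sum fun i _ => ?_)
      · rw [mul_assoc]; exact mul_le_mul_right (hterm j) _
      · rw [mul_assoc]; exact mul_le_mul_right (htermu i) _
    rw [eLpNorm_eq_lintegral_rpow_enorm_toReal hp0 hptop, eLpNorm_eq_lintegral_rpow_enorm_toReal hp0 hptop]
    calc (∫⁻ x, (‖Φ g x - Φ h x‖₊ : ℝ≥0∞) ^ p.toReal ∂μ) ^ (1 / p.toReal)
        ≤ (C * I) ^ (1 / p.toReal) := ENNReal.rpow_le_rpow htotal (by positivity)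
      _ = C ^ (1 / p.toReal) * I ^ (1 / p.toReal) := ENNReal.mul_rpow_of_nonneg _ _ (by positivity)
  -- Fixed point
  haveI : Fact (1 ≤ p) := ⟨hp1⟩
  have hK1 : C ^ (1 / p.toReal) < 1 := ENNReal.rpow_lt_one hC (by positivity)
  have hKt : C ^ (1 / p.toReal) ≠ ⊤ := (hK1.trans ENNReal.one_lt_top).ne
  set K' : NNReal := (C ^ (1 / p.toReal)).toNNReal with hK'
  have hKcoe : (K' : ℝ≥0∞) = C ^ (1 / p.toReal) := ENNReal.coe_toNNReal hKt
  have hΨmem : ∀ f : Lp Y p μ, MemLp (Φ f) p μ := fun f =>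
    part1 f (Lp.stronglyMeasurable f) (Lp.memLp f)
  set Ψ : Lp Y p μ → Lp Y p μ := fun f => (hΨmem f).toLp (Φ f) with hΨ
  have hlip : LipschitzWith K' Ψ := by
    intro f₁ f₂
    have e1 : edist (Ψ f₁) (Ψ f₂) = eLpNorm (fun x => Φ (⇑f₁) x - Φ (⇑f₂) x) p μ := by
      rw [Lp.edist_def]
      apply eLpNorm_congr_ae
      filter_upwards [MemLp.coeFn_toLp (hΨmem f₁), MemLp.coeFn_toLp (hΨmem f₂)] with x h1 h2
      rw [Pi.sub_apply]
      show (Ψ f₁ : X → Y) x - (Ψ f₂ : X → Y) x = _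
      rw [h1, h2]
    rw [e1, Lp.edist_def, hKcoe]
    exact part2 _ _ (Lp.stronglyMeasurable f₁) (Lp.stronglyMeasurable f₂)
      (Lp.memLp f₁) (Lp.memLp f₂)
  have hcontr : ContractingWith K' Ψ := by
    refine ⟨?_, hlip⟩
    have : (K' : ℝ≥0∞) < 1 := hKcoe ▸ hK1
    exact_mod_cast this
  haveI : Nonempty (Lp Y p μ) := ⟨0⟩
  set f₀ : Lp Y p μ := hcontr.fixedPoint Ψ with hf₀
  have hfix : Ψ f₀ = f₀ := hcontr.fixedPoint_isFixedPt
  have hfeq : Φ ⇑f₀ =ᵐ[μ] ⇑f₀ := by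
    have h1 : ⇑(Ψ f₀) =ᵐ[μ] Φ ⇑f₀ := MemLp.coeFn_toLp _
    rw [hfix] at h1
    exact h1.symm
  refine ⟨part1, part2, ⟨⇑f₀, Lp.stronglyMeasurable f₀, Lp.memLp f₀, hfeq, ?_⟩⟩
  intro f' hsm' hL' hfp'
  set a := eLpNorm (fun x => f' x - ⇑f₀ x) p μ with ha
  have haest : AEStronglyMeasurable (fun x => f' x - ⇑f₀ x) μ :=
    (hsm'.sub (Lp.stronglyMeasurable f₀)).aestronglyMeasurable
  have halt : a ≠ ⊤ := (hL'.sub (Lp.memLp f₀)).2.ne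
  have hale : a ≤ C ^ (1 / p.toReal) * a := by
    have h3 : (fun x => Φ f' x - Φ (⇑f₀) x) =ᵐ[μ] fun x => f' x - ⇑f₀ x := by
      filter_upwards [hfp', hfeq] with x e1 e2
      rw [e1, e2]
    calc a = eLpNorm (fun x => Φ f' x - Φ (⇑f₀) x) p μ := (eLpNorm_congr_ae h3).symm
      _ ≤ C ^ (1 / p.toReal) * a :=
        part2 f' ⇑f₀ hsm' (Lp.stronglyMeasurable f₀) hL' (Lp.memLp f₀)
  have ha0 : a = 0 := by
    by_contra h0
    have h4 : C ^ (1 / p.toReal) * a < 1 * a := ENNReal.mul_lt_mul_left h0 halt hK1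
    rw [one_mul] at h4
    exact absurd (hale.trans_lt h4) (lt_irrefl a)
  have h5 := (eLpNorm_eq_zero_iff haest hp0).1 ha0
  filter_upwards [h5] with x hx
  exact sub_eq_zero.1 hx
end

section
/- Let 0 < p < 1 and assume the s_j and t_i are essentially bounded. If Σ_{j=1}^m J_{b_j}·‖s_j‖_{L^∞(K_j)}^p + Σ_{i=1}^n J_{u_i}·‖t_i‖_{L^∞(V_i)}^p < 1, then the affine RB operator Φ maps L^p(X,μ;Y) into itself and is a contraction with respect to the complete metric d_p(g,h) := ∫_X ‖g(x) − h(x)‖_Y^p dμ(x): d_p(Φg, Φh) ≤ ( Σ_j J_{b_j}‖s_j‖_{L^∞}^p + Σ_i J_{u_i}‖t_i‖_{L^∞}^p )·d_p(g,h) for all g,h ∈ L^p(X,μ;Y); hence Φ has a unique fixed point in L^p(X,μ;Y). -/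
open MeasureTheory ENNReal Filter Topology
open scoped NNReal

section Aux
variable {X Y : Type*} [MeasurableSpace X] {μ : Measure X}

lemma ax_map_le {K : Set X} (hK : MeasurableSet K) {b c : X → X}
    (hc : Measurable c) (hcb : ∀ x ∈ K, c (b x) = x)
    {J : NNReal} (hJ : ∀ A : Set X, MeasurableSet A → A ⊆ K → μ (b '' A) ≤ J * μ A)
    (H : X → ℝ≥0∞) (hH : Measurable H) :
    ∫⁻ x in b '' K, H (c x) ∂μ ≤ J * ∫⁻ x in K, H x ∂μ := by
  have hmeasle : (μ.restrict (b '' K)).map c ≤ (J : ℝ≥0∞) • μ.restrict K := by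
    rw [Measure.le_iff]
    intro A hA
    rw [Measure.map_apply hc hA, Measure.restrict_apply (hc hA),
      Measure.smul_apply, Measure.restrict_apply hA, smul_eq_mul]
    have hset : c ⁻¹' A ∩ b '' K = b '' (A ∩ K) := by
      ext x
      constructor
      · rintro ⟨hxA, t, htK, rfl⟩
        exact ⟨t, ⟨by rwa [Set.mem_preimage, hcb t htK] at hxA, htK⟩, rfl⟩
      · rintro ⟨t, ⟨htA, htK⟩, rfl⟩
        exact ⟨by rwa [Set.mem_preimage, hcb t htK], ⟨t, htK, rfl⟩⟩
    rw [hset]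
    exact hJ (A ∩ K) (hA.inter hK) Set.inter_subset_right
  calc ∫⁻ x in b '' K, H (c x) ∂μ = ∫⁻ y, H y ∂((μ.restrict (b '' K)).map c) :=
        (lintegral_map hH hc).symm
    _ ≤ ∫⁻ y, H y ∂((J : ℝ≥0∞) • μ.restrict K) := lintegral_mono' hmeasle le_rfl
    _ = J * ∫⁻ x in K, H x ∂μ := lintegral_smul_measure _ _

variable [NormedAddCommGroup Y]

lemma ax_piece_bound {K : Set X} (hK : MeasurableSet K) {b c : X → X}
    (hBm : MeasurableSet (b '' K))
    (hc : Measurable c) (hcb : ∀ x ∈ K, c (b x) = x)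
    {J : NNReal} (hJ : ∀ A : Set X, MeasurableSet A → A ⊆ K → μ (b '' A) ≤ J * μ A)
    (q : ℝ)
    (W : X → Y) (hWm : Measurable fun t => (‖W t‖₊ : ℝ≥0∞))
    (G : X → Y)
    (hG : ∀ x ∈ b '' K, (‖G x‖₊ : ℝ≥0∞) = (‖W (c x)‖₊ : ℝ≥0∞)) :
    ∫⁻ x in b '' K, (‖G x‖₊ : ℝ≥0∞) ^ q ∂μ ≤ J * ∫⁻ t in K, (‖W t‖₊ : ℝ≥0∞) ^ q ∂μ := by
  have heq : ∫⁻ x in b '' K, (‖G x‖₊ : ℝ≥0∞) ^ q ∂μ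
      = ∫⁻ x in b '' K, ((fun t => (‖W t‖₊ : ℝ≥0∞) ^ q) (c x)) ∂μ := by
    refine setLIntegral_congr_fun hBm (fun x hx => ?_)
    simp only [hG x hx]
  rw [heq]
  exact ax_map_le hK hc hcb hJ _ (hWm.pow_const q)

-- essential-sup bound on a restricted integral
lemma ax_ess_bound {K : Set X} {S : X → ℝ} {q : ℝ} (hq : 0 ≤ q)
    (F : X → ℝ≥0∞) (hF : AEMeasurable F (μ.restrict K)) :
    ∫⁻ t in K, (‖S t‖₊ : ℝ≥0∞) ^ q * F t ∂μ
      ≤ eLpNorm S ⊤ (μ.restrict K) ^ q * ∫⁻ t in K, F t ∂μ := by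
  rw [eLpNorm_exponent_top]
  calc ∫⁻ t in K, (‖S t‖₊ : ℝ≥0∞) ^ q * F t ∂μ
      ≤ ∫⁻ t in K, eLpNormEssSup S (μ.restrict K) ^ q * F t ∂μ := by
        refine lintegral_mono_ae ?_
        filter_upwards [ae_le_eLpNormEssSup (f := S) (μ := μ.restrict K)] with t ht
        exact mul_le_mul_left (ENNReal.rpow_le_rpow (by exact_mod_cast ht) hq) _
    _ = eLpNormEssSup S (μ.restrict K) ^ q * ∫⁻ t in K, F t ∂μ :=
        lintegral_const_mul'' _ hF

end Aux

/-- For `0 < p < 1`, if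
`Σ_j J_{b_j} ‖s_j‖_{L^∞(K_j)}^p + Σ_i J_{u_i} ‖t_i‖_{L^∞(V_i)}^p < 1`, the affine RB operator
`Φ` maps `L^p(X,μ;Y)` into itself and is a contraction for the complete metric
`d_p(g,h) := ∫ ‖g − h‖_Y^p dμ`; hence it has a unique fixed point in `L^p(X,μ;Y)`. -/
theorem affine_RB_contraction_on_Lp_small_exponent {X Y : Type*} [MeasurableSpace X]
    (μ : Measure X) [NormedAddCommGroup Y] [NormedSpace ℝ Y] [CompleteSpace Y]
    {m n : ℕ} (Kj : Fin m → Set X) (V : Fin n → Set X)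
    (hKm : ∀ j, MeasurableSet (Kj j)) (hVm : ∀ i, MeasurableSet (V i))
    (b : Fin m → X → X) (u : Fin n → X → X)
    (hbinj : ∀ j, Set.InjOn (b j) (Kj j)) (huinj : ∀ i, Set.InjOn (u i) (V i))
    (hBm : ∀ j, MeasurableSet (b j '' Kj j)) (hUm : ∀ i, MeasurableSet (u i '' V i))
    -- measurable inverses
    (c : Fin m → X → X) (d : Fin n → X → X)
    (hc : ∀ j, Measurable (c j)) (hd : ∀ i, Measurable (d i))
    (hcb : ∀ j, ∀ x ∈ Kj j, c j (b j x) = x) (hdu : ∀ i, ∀ x ∈ V i, d i (u i x) = x)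
    (hcover : ((⋃ j, b j '' Kj j) ∪ ⋃ i, u i '' V i) = Set.univ)
    (hdisj : Pairwise (Function.onFun Disjoint
      (Sum.elim (fun j : Fin m => b j '' Kj j) (fun i : Fin n => u i '' V i))))
    (Jb : Fin m → NNReal) (Ju : Fin n → NNReal)
    (hJb : ∀ j, ∀ A : Set X, MeasurableSet A → A ⊆ Kj j → μ (b j '' A) ≤ Jb j * μ A)
    (hJu : ∀ i, ∀ A : Set X, MeasurableSet A → A ⊆ V i → μ (u i '' A) ≤ Ju i * μ A)
    (P : Fin m → X → Y) (Q : Fin n → X → Y) (S : Fin m → X → ℝ) (T : Fin n → X → ℝ)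
    (hPm : ∀ j, StronglyMeasurable (P j)) (hQm : ∀ i, StronglyMeasurable (Q i))
    (hSm : ∀ j, Measurable (S j)) (hTm : ∀ i, Measurable (T i))
    (p : ℝ≥0∞) (hp0 : 0 < p) (hp1 : p < 1)
    (hP : ∀ j, MemLp (P j) p (μ.restrict (Kj j))) (hQ : ∀ i, MemLp (Q i) p (μ.restrict (V i)))
    (hSess : ∀ j, eLpNorm (S j) ⊤ (μ.restrict (Kj j)) ≠ ⊤)
    (hTess : ∀ i, eLpNorm (T i) ⊤ (μ.restrict (V i)) ≠ ⊤)
    (hC : (∑ j, (Jb j : ℝ≥0∞) * eLpNorm (S j) ⊤ (μ.restrict (Kj j)) ^ p.toReal)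
        + (∑ i, (Ju i : ℝ≥0∞) * eLpNorm (T i) ⊤ (μ.restrict (V i)) ^ p.toReal) < 1)
    (Φ : (X → Y) → (X → Y))
    (hΦb : ∀ f : X → Y, ∀ j, ∀ x ∈ Kj j, Φ f (b j x) = P j x + S j x • f x)
    (hΦu : ∀ f : X → Y, ∀ i, ∀ x ∈ V i, Φ f (u i x) = Q i x + T i x • f x) :
    (∀ f : X → Y, StronglyMeasurable f → MemLp f p μ → MemLp (Φ f) p μ) ∧
    (∀ g h : X → Y, StronglyMeasurable g → StronglyMeasurable h →
      MemLp g p μ → MemLp h p μ →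
      (∫⁻ x, (‖Φ g x - Φ h x‖₊ : ℝ≥0∞) ^ p.toReal ∂μ) ≤
        ((∑ j, (Jb j : ℝ≥0∞) * eLpNorm (S j) ⊤ (μ.restrict (Kj j)) ^ p.toReal)
          + (∑ i, (Ju i : ℝ≥0∞) * eLpNorm (T i) ⊤ (μ.restrict (V i)) ^ p.toReal))
        * ∫⁻ x, (‖g x - h x‖₊ : ℝ≥0∞) ^ p.toReal ∂μ) ∧
    (∃ f : X → Y, StronglyMeasurable f ∧ MemLp f p μ ∧ Φ f =ᵐ[μ] f ∧
      ∀ f' : X → Y, StronglyMeasurable f' → MemLp f' p μ → Φ f' =ᵐ[μ] f' → f' =ᵐ[μ] f) := by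
  classical
  set q : ℝ := p.toReal with hqdef
  have hptop : p ≠ ⊤ := (hp1.trans ENNReal.one_lt_top).ne
  have hq0 : 0 < q := ENNReal.toReal_pos hp0.ne' hptop
  have hq1 : q ≤ 1 := by
    have := ENNReal.toReal_mono (by simp) hp1.le
    simpa using this
  set C : ℝ≥0∞ := (∑ j, (Jb j : ℝ≥0∞) * eLpNorm (S j) ⊤ (μ.restrict (Kj j)) ^ q)
      + (∑ i, (Ju i : ℝ≥0∞) * eLpNorm (T i) ⊤ (μ.restrict (V i)) ^ q) with hCdef
  -- Φ f agrees with an explicit strongly measurable function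
  have hΦeq : ∀ f : X → Y, Φ f = fun x =>
      (∑ j, (b j '' Kj j).indicator (fun x => P j (c j x) + S j (c j x) • f (c j x)) x)
      + ∑ i, (u i '' V i).indicator (fun x => Q i (d i x) + T i (d i x) • f (d i x)) x := by
    intro f
    funext x
    have hx : x ∈ (⋃ j, b j '' Kj j) ∪ ⋃ i, u i '' V i := hcover ▸ Set.mem_univ x
    rcases hx with hx | hx
    · obtain ⟨j0, t, ht, rfl⟩ := Set.mem_iUnion.1 hx
      have h1 : (∑ j, (b j '' Kj j).indicator
          (fun x => P j (c j x) + S j (c j x) • f (c j x)) (b j0 t))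
          = P j0 (c j0 (b j0 t)) + S j0 (c j0 (b j0 t)) • f (c j0 (b j0 t)) := by
        rw [Finset.sum_eq_single j0]
        · exact Set.indicator_of_mem (Set.mem_image_of_mem _ ht) _
        · intro j _ hne
          refine Set.indicator_of_notMem (fun hmem => ?_) _
          exact Set.disjoint_left.1
            (@hdisj (Sum.inl j) (Sum.inl j0) (by simpa using hne))
            hmem (Set.mem_image_of_mem _ ht)
        · intro hj; exact absurd (Finset.mem_univ j0) hj
      have h2 : (∑ i, (u i '' V i).indicator
          (fun x => Q i (d i x) + T i (d i x) • f (d i x)) (b j0 t)) = 0 := by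
        refine Finset.sum_eq_zero fun i _ => ?_
        refine Set.indicator_of_notMem (fun hmem => ?_) _
        exact Set.disjoint_left.1
          (@hdisj (Sum.inr i) (Sum.inl j0) (by simp))
          hmem (Set.mem_image_of_mem _ ht)
      rw [h1, h2, hcb j0 t ht, add_zero, hΦb f j0 t ht]
    · obtain ⟨i0, t, ht, rfl⟩ := Set.mem_iUnion.1 hx
      have h1 : (∑ i, (u i '' V i).indicator
          (fun x => Q i (d i x) + T i (d i x) • f (d i x)) (u i0 t))
          = Q i0 (d i0 (u i0 t)) + T i0 (d i0 (u i0 t)) • f (d i0 (u i0 t)) := by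
        rw [Finset.sum_eq_single i0]
        · exact Set.indicator_of_mem (Set.mem_image_of_mem _ ht) _
        · intro i _ hne
          refine Set.indicator_of_notMem (fun hmem => ?_) _
          exact Set.disjoint_left.1
            (@hdisj (Sum.inr i) (Sum.inr i0) (by simpa using hne))
            hmem (Set.mem_image_of_mem _ ht)
        · intro hi; exact absurd (Finset.mem_univ i0) hi
      have h2 : (∑ j, (b j '' Kj j).indicator
          (fun x => P j (c j x) + S j (c j x) • f (c j x)) (u i0 t)) = 0 := by
        refine Finset.sum_eq_zero fun j _ => ?_
        refine Set.indicator_of_notMem (fun hmem => ?_) _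
        exact Set.disjoint_left.1
          (@hdisj (Sum.inl j) (Sum.inr i0) (by simp))
          hmem (Set.mem_image_of_mem _ ht)
      rw [h1, h2, hdu i0 t ht, zero_add, hΦu f i0 t ht]
  have hSMΦ : ∀ f : X → Y, StronglyMeasurable f → StronglyMeasurable (Φ f) := by
    intro f hf
    rw [hΦeq f]
    refine StronglyMeasurable.add ?_ ?_
    · refine Finset.stronglyMeasurable_fun_sum _ fun j _ => StronglyMeasurable.indicator ?_ (hBm j)
      exact ((hPm j).comp_measurable (hc j)).add
        (((hSm j).comp (hc j)).stronglyMeasurable.smul (hf.comp_measurable (hc j)))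
    · refine Finset.stronglyMeasurable_fun_sum _ fun i _ => StronglyMeasurable.indicator ?_ (hUm i)
      exact ((hQm i).comp_measurable (hd i)).add
        (((hTm i).comp (hd i)).stronglyMeasurable.smul (hf.comp_measurable (hd i)))
  -- splitting the integral over the pieces
  have hsplit : ∀ G : X → ℝ≥0∞, ∫⁻ x, G x ∂μ ≤
      (∑ j, ∫⁻ x in b j '' Kj j, G x ∂μ) + ∑ i, ∫⁻ x in u i '' V i, G x ∂μ := by
    intro G
    have h0 : ∫⁻ x, G x ∂μ = ∫⁻ x in ((⋃ j, b j '' Kj j) ∪ ⋃ i, u i '' V i), G x ∂μ := by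
      rw [hcover, Measure.restrict_univ]
    rw [h0]
    refine le_trans (lintegral_union_le _ _ _) (add_le_add ?_ ?_)
    · exact le_trans (lintegral_iUnion_le _ _) (by rw [tsum_fintype])
    · exact le_trans (lintegral_iUnion_le _ _) (by rw [tsum_fintype])
  -- the contraction estimate (for strongly measurable functions)
  have hcontr : ∀ g h : X → Y, StronglyMeasurable g → StronglyMeasurable h →
      (∫⁻ x, (‖Φ g x - Φ h x‖₊ : ℝ≥0∞) ^ q ∂μ) ≤
        C * ∫⁻ x, (‖g x - h x‖₊ : ℝ≥0∞) ^ q ∂μ := by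
    intro g h hg hh
    set D : ℝ≥0∞ := ∫⁻ x, (‖g x - h x‖₊ : ℝ≥0∞) ^ q ∂μ with hDdef
    refine le_trans (hsplit _) ?_
    have hbpiece : ∀ j, ∫⁻ x in b j '' Kj j, (‖Φ g x - Φ h x‖₊ : ℝ≥0∞) ^ q ∂μ ≤
        ((Jb j : ℝ≥0∞) * eLpNorm (S j) ⊤ (μ.restrict (Kj j)) ^ q) * D := by
      intro j
      have step1 : ∫⁻ x in b j '' Kj j, (‖Φ g x - Φ h x‖₊ : ℝ≥0∞) ^ q ∂μ ≤
          (Jb j) * ∫⁻ t in Kj j, (‖S j t • (g t - h t)‖₊ : ℝ≥0∞) ^ q ∂μ := by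
        refine ax_piece_bound (hKm j) (hBm j) (hc j) (hcb j) (hJb j) q
          (fun t => S j t • (g t - h t))
          (((hSm j).stronglyMeasurable.smul (hg.sub hh)).enorm)
          (fun x => Φ g x - Φ h x) ?_
        rintro x ⟨t, ht, rfl⟩
        rw [hcb j t ht, hΦb g j t ht, hΦb h j t ht]
        congr 1
        rw [add_sub_add_left_eq_sub, ← smul_sub]
      refine le_trans step1 ?_
      have step2 : ∫⁻ t in Kj j, (‖S j t • (g t - h t)‖₊ : ℝ≥0∞) ^ q ∂μ ≤
          eLpNorm (S j) ⊤ (μ.restrict (Kj j)) ^ q * D := by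
        have heq2 : ∀ t, ((‖S j t • (g t - h t)‖₊ : ℝ≥0∞)) ^ q
            = (‖S j t‖₊ : ℝ≥0∞) ^ q * (‖g t - h t‖₊ : ℝ≥0∞) ^ q := by
          intro t
          rw [nnnorm_smul, ENNReal.coe_mul, ENNReal.mul_rpow_of_nonneg _ _ hq0.le]
        simp_rw [heq2]
        refine le_trans (ax_ess_bound hq0.le _ ((hg.sub hh).enorm.pow_const q).aemeasurable) ?_
        exact mul_le_mul_right (setLIntegral_le_lintegral _ _) _
      calc (Jb j : ℝ≥0∞) * ∫⁻ t in Kj j, (‖S j t • (g t - h t)‖₊ : ℝ≥0∞) ^ q ∂μ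
          ≤ (Jb j : ℝ≥0∞) * (eLpNorm (S j) ⊤ (μ.restrict (Kj j)) ^ q * D) :=
            mul_le_mul_right step2 _
        _ = ((Jb j : ℝ≥0∞) * eLpNorm (S j) ⊤ (μ.restrict (Kj j)) ^ q) * D := by ring
    have hupiece : ∀ i, ∫⁻ x in u i '' V i, (‖Φ g x - Φ h x‖₊ : ℝ≥0∞) ^ q ∂μ ≤
        ((Ju i : ℝ≥0∞) * eLpNorm (T i) ⊤ (μ.restrict (V i)) ^ q) * D := by
      intro i
      have step1 : ∫⁻ x in u i '' V i, (‖Φ g x - Φ h x‖₊ : ℝ≥0∞) ^ q ∂μ ≤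
          (Ju i) * ∫⁻ t in V i, (‖T i t • (g t - h t)‖₊ : ℝ≥0∞) ^ q ∂μ := by
        refine ax_piece_bound (hVm i) (hUm i) (hd i) (hdu i) (hJu i) q
          (fun t => T i t • (g t - h t))
          (((hTm i).stronglyMeasurable.smul (hg.sub hh)).enorm)
          (fun x => Φ g x - Φ h x) ?_
        rintro x ⟨t, ht, rfl⟩
        rw [hdu i t ht, hΦu g i t ht, hΦu h i t ht]
        congr 1
        rw [add_sub_add_left_eq_sub, ← smul_sub]
      refine le_trans step1 ?_
      have step2 : ∫⁻ t in V i, (‖T i t • (g t - h t)‖₊ : ℝ≥0∞) ^ q ∂μ ≤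
          eLpNorm (T i) ⊤ (μ.restrict (V i)) ^ q * D := by
        have heq2 : ∀ t, ((‖T i t • (g t - h t)‖₊ : ℝ≥0∞)) ^ q
            = (‖T i t‖₊ : ℝ≥0∞) ^ q * (‖g t - h t‖₊ : ℝ≥0∞) ^ q := by
          intro t
          rw [nnnorm_smul, ENNReal.coe_mul, ENNReal.mul_rpow_of_nonneg _ _ hq0.le]
        simp_rw [heq2]
        refine le_trans (ax_ess_bound hq0.le _ ((hg.sub hh).enorm.pow_const q).aemeasurable) ?_
        exact mul_le_mul_right (setLIntegral_le_lintegral _ _) _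
      calc (Ju i : ℝ≥0∞) * ∫⁻ t in V i, (‖T i t • (g t - h t)‖₊ : ℝ≥0∞) ^ q ∂μ
          ≤ (Ju i : ℝ≥0∞) * (eLpNorm (T i) ⊤ (μ.restrict (V i)) ^ q * D) :=
            mul_le_mul_right step2 _
        _ = ((Ju i : ℝ≥0∞) * eLpNorm (T i) ⊤ (μ.restrict (V i)) ^ q) * D := by ring
    calc (∑ j, ∫⁻ x in b j '' Kj j, (‖Φ g x - Φ h x‖₊ : ℝ≥0∞) ^ q ∂μ)
          + ∑ i, ∫⁻ x in u i '' V i, (‖Φ g x - Φ h x‖₊ : ℝ≥0∞) ^ q ∂μ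
        ≤ (∑ j, ((Jb j : ℝ≥0∞) * eLpNorm (S j) ⊤ (μ.restrict (Kj j)) ^ q) * D)
          + ∑ i, ((Ju i : ℝ≥0∞) * eLpNorm (T i) ⊤ (μ.restrict (V i)) ^ q) * D :=
          add_le_add (Finset.sum_le_sum fun j _ => hbpiece j)
            (Finset.sum_le_sum fun i _ => hupiece i)
      _ = C * D := by rw [hCdef, ← Finset.sum_mul, ← Finset.sum_mul, ← add_mul]
    -- membership part
  have hlintfin : ∀ f : X → Y, MemLp f p μ → ∫⁻ x, (‖f x‖₊ : ℝ≥0∞) ^ q ∂μ < ⊤ :=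
    fun f hf => lintegral_rpow_enorm_lt_top_of_eLpNorm_lt_top hp0.ne' hptop hf.2
  have hmemiff : ∀ f : X → Y, AEStronglyMeasurable f μ →
      (∫⁻ x, (‖f x‖₊ : ℝ≥0∞) ^ q ∂μ < ⊤) → MemLp f p μ := by
    intro f hf hint
    exact ⟨hf, (eLpNorm_lt_top_iff_lintegral_rpow_enorm_lt_top hp0.ne' hptop).2 hint⟩
  have hpoint_add : ∀ (a bb : Y), (‖a + bb‖₊ : ℝ≥0∞) ^ q ≤ (‖a‖₊ : ℝ≥0∞) ^ q + (‖bb‖₊ : ℝ≥0∞) ^ q := by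
    intro a bb
    refine le_trans (ENNReal.rpow_le_rpow ?_ hq0.le) (ENNReal.rpow_add_le_add_rpow _ _ hq0.le hq1)
    exact_mod_cast nnnorm_add_le a bb
  have hmap : ∀ f : X → Y, StronglyMeasurable f → MemLp f p μ → MemLp (Φ f) p μ := by
    intro f hf hfLp
    refine hmemiff _ (hSMΦ f hf).aestronglyMeasurable ?_
    refine lt_of_le_of_lt (hsplit _) ?_
    rw [ENNReal.add_lt_top]
    constructor
    · rw [ENNReal.sum_lt_top]
      intro j _
      have step1 : ∫⁻ x in b j '' Kj j, (‖Φ f x‖₊ : ℝ≥0∞) ^ q ∂μ ≤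
          (Jb j) * ∫⁻ t in Kj j, (‖P j t + S j t • f t‖₊ : ℝ≥0∞) ^ q ∂μ := by
        refine ax_piece_bound (hKm j) (hBm j) (hc j) (hcb j) (hJb j) q
          (fun t => P j t + S j t • f t)
          (((hPm j).add ((hSm j).stronglyMeasurable.smul hf)).enorm) (Φ f) ?_
        rintro x ⟨t, ht, rfl⟩
        rw [hcb j t ht, hΦb f j t ht]
      refine lt_of_le_of_lt step1 (ENNReal.mul_lt_top ENNReal.coe_lt_top ?_)
      have step2 : ∫⁻ t in Kj j, (‖P j t + S j t • f t‖₊ : ℝ≥0∞) ^ q ∂μ ≤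
          (∫⁻ t in Kj j, (‖P j t‖₊ : ℝ≥0∞) ^ q ∂μ)
          + ∫⁻ t in Kj j, (‖S j t • f t‖₊ : ℝ≥0∞) ^ q ∂μ := by
        refine le_trans (lintegral_mono fun t => hpoint_add _ _) ?_
        rw [lintegral_add_left (f := fun t => (‖P j t‖₊ : ℝ≥0∞) ^ q) ((hPm j).enorm.pow_const q)]
      refine lt_of_le_of_lt step2 ?_
      rw [ENNReal.add_lt_top]
      refine ⟨lintegral_rpow_enorm_lt_top_of_eLpNorm_lt_top hp0.ne' hptop (hP j).2, ?_⟩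
      have step3 : ∫⁻ t in Kj j, (‖S j t • f t‖₊ : ℝ≥0∞) ^ q ∂μ ≤
          eLpNorm (S j) ⊤ (μ.restrict (Kj j)) ^ q * ∫⁻ t in Kj j, (‖f t‖₊ : ℝ≥0∞) ^ q ∂μ := by
        simp_rw [nnnorm_smul, ENNReal.coe_mul, ENNReal.mul_rpow_of_nonneg _ _ hq0.le]
        exact ax_ess_bound hq0.le _ (hf.enorm.pow_const q).aemeasurable
      refine lt_of_le_of_lt step3 (ENNReal.mul_lt_top ?_ ?_)
      · exact ENNReal.rpow_lt_top_of_nonneg hq0.le (hSess j)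
      · exact lt_of_le_of_lt (setLIntegral_le_lintegral _ _) (hlintfin f hfLp)
    · rw [ENNReal.sum_lt_top]
      intro i _
      have step1 : ∫⁻ x in u i '' V i, (‖Φ f x‖₊ : ℝ≥0∞) ^ q ∂μ ≤
          (Ju i) * ∫⁻ t in V i, (‖Q i t + T i t • f t‖₊ : ℝ≥0∞) ^ q ∂μ := by
        refine ax_piece_bound (hVm i) (hUm i) (hd i) (hdu i) (hJu i) q
          (fun t => Q i t + T i t • f t)
          (((hQm i).add ((hTm i).stronglyMeasurable.smul hf)).enorm) (Φ f) ?_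
        rintro x ⟨t, ht, rfl⟩
        rw [hdu i t ht, hΦu f i t ht]
      refine lt_of_le_of_lt step1 (ENNReal.mul_lt_top ENNReal.coe_lt_top ?_)
      have step2 : ∫⁻ t in V i, (‖Q i t + T i t • f t‖₊ : ℝ≥0∞) ^ q ∂μ ≤
          (∫⁻ t in V i, (‖Q i t‖₊ : ℝ≥0∞) ^ q ∂μ)
          + ∫⁻ t in V i, (‖T i t • f t‖₊ : ℝ≥0∞) ^ q ∂μ := by
        refine le_trans (lintegral_mono fun t => hpoint_add _ _) ?_
        rw [lintegral_add_left (f := fun t => (‖Q i t‖₊ : ℝ≥0∞) ^ q) ((hQm i).enorm.pow_const q)]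
      refine lt_of_le_of_lt step2 ?_
      rw [ENNReal.add_lt_top]
      refine ⟨lintegral_rpow_enorm_lt_top_of_eLpNorm_lt_top hp0.ne' hptop (hQ i).2, ?_⟩
      have step3 : ∫⁻ t in V i, (‖T i t • f t‖₊ : ℝ≥0∞) ^ q ∂μ ≤
          eLpNorm (T i) ⊤ (μ.restrict (V i)) ^ q * ∫⁻ t in V i, (‖f t‖₊ : ℝ≥0∞) ^ q ∂μ := by
        simp_rw [nnnorm_smul, ENNReal.coe_mul, ENNReal.mul_rpow_of_nonneg _ _ hq0.le]
        exact ax_ess_bound hq0.le _ (hf.enorm.pow_const q).aemeasurable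
      refine lt_of_le_of_lt step3 (ENNReal.mul_lt_top ?_ ?_)
      · exact ENNReal.rpow_lt_top_of_nonneg hq0.le (hTess i)
      · exact lt_of_le_of_lt (setLIntegral_le_lintegral _ _) (hlintfin f hfLp)
  refine ⟨hmap, fun g h hg hh _ _ => hcontr g h hg hh, ?_⟩
  -- the fixed point
  have hC1 : C < 1 := hC
  have hCtop : C ≠ ⊤ := (hC1.trans ENNReal.one_lt_top).ne
  -- triangle inequality for the premetric
  have hTri : ∀ g h k : X → Y, StronglyMeasurable g → StronglyMeasurable h →
      (∫⁻ x, (‖g x - k x‖₊ : ℝ≥0∞) ^ q ∂μ) ≤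
      (∫⁻ x, (‖g x - h x‖₊ : ℝ≥0∞) ^ q ∂μ) + ∫⁻ x, (‖h x - k x‖₊ : ℝ≥0∞) ^ q ∂μ := by
    intro g h k hg hh
    have hpt : ∀ x, (‖g x - k x‖₊ : ℝ≥0∞) ^ q ≤
        (‖g x - h x‖₊ : ℝ≥0∞) ^ q + (‖h x - k x‖₊ : ℝ≥0∞) ^ q := by
      intro x
      have : g x - k x = (g x - h x) + (h x - k x) := by abel
      rw [this]
      exact hpoint_add _ _
    refine le_trans (lintegral_mono hpt) ?_
    have hm : Measurable fun x => (‖g x - h x‖₊ : ℝ≥0∞) ^ q :=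
      (hg.sub hh).enorm.pow_const q
    rw [lintegral_add_left hm]
  have hDfin : ∀ g h : X → Y, StronglyMeasurable g → MemLp g p μ → MemLp h p μ →
      (∫⁻ x, (‖g x - h x‖₊ : ℝ≥0∞) ^ q ∂μ) < ⊤ := by
    intro g h hg hgLp hhLp
    have hpt : ∀ x, (‖g x - h x‖₊ : ℝ≥0∞) ^ q ≤
        (‖g x‖₊ : ℝ≥0∞) ^ q + (‖h x‖₊ : ℝ≥0∞) ^ q := by
      intro x
      have : g x - h x = g x + (-h x) := by abel
      rw [this]
      exact le_trans (hpoint_add _ _) (by rw [nnnorm_neg])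
    refine lt_of_le_of_lt (lintegral_mono hpt) ?_
    have hm : Measurable fun x => (‖g x‖₊ : ℝ≥0∞) ^ q := hg.enorm.pow_const q
    rw [lintegral_add_left hm]
    exact ENNReal.add_lt_top.2 ⟨hlintfin g hgLp, hlintfin h hhLp⟩
  -- the iteration sequence
  set F : ℕ → X → Y := fun k => Φ^[k] 0 with hFdef
  have hF0 : F 0 = 0 := rfl
  have hFS : ∀ k, F (k + 1) = Φ (F k) := fun k => Function.iterate_succ_apply' Φ k 0
  have hFSM : ∀ k, StronglyMeasurable (F k) := by
    intro k
    induction k with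
    | zero => exact stronglyMeasurable_const
    | succ k ih => rw [hFS]; exact hSMΦ _ ih
  have hFLp : ∀ k, MemLp (F k) p μ := by
    intro k
    induction k with
    | zero => exact MemLp.zero
    | succ k ih => rw [hFS]; exact hmap _ (hFSM k) ih
  set D0 : ℝ≥0∞ := ∫⁻ x, (‖F 0 x - F 1 x‖₊ : ℝ≥0∞) ^ q ∂μ with hD0def
  have hD0fin : D0 < ⊤ := hDfin _ _ (hFSM 0) (hFLp 0) (hFLp 1)
  have hDk : ∀ k, (∫⁻ x, (‖F k x - F (k+1) x‖₊ : ℝ≥0∞) ^ q ∂μ) ≤ C ^ k * D0 := by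
    intro k
    induction k with
    | zero => simpa using le_rfl
    | succ k ih =>
      have h1 : (∫⁻ x, (‖F (k+1) x - F (k+2) x‖₊ : ℝ≥0∞) ^ q ∂μ) ≤
          C * ∫⁻ x, (‖F k x - F (k+1) x‖₊ : ℝ≥0∞) ^ q ∂μ := by
        have h0 := hcontr (F k) (F (k+1)) (hFSM k) (hFSM (k+1))
        rw [← hFS (k+1), ← hFS k] at h0
        exact h0
      calc (∫⁻ x, (‖F (k+1) x - F (k+2) x‖₊ : ℝ≥0∞) ^ q ∂μ)
          ≤ C * ∫⁻ x, (‖F k x - F (k+1) x‖₊ : ℝ≥0∞) ^ q ∂μ := h1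
        _ ≤ C * (C ^ k * D0) := mul_le_mul_right ih _
        _ = C ^ (k+1) * D0 := by ring
  set M : ℝ≥0∞ := (1 - C)⁻¹ * D0 with hMdef
  have hMfin : M < ⊤ := by
    refine ENNReal.mul_lt_top ?_ hD0fin
    rw [ENNReal.inv_lt_top]
    exact tsub_pos_of_lt hC1
  have hgeom : ∀ k : ℕ, (∑' j : ℕ, C ^ (k + j) * D0) ≤ C ^ k * M := by
    intro k
    have h1 : (∑' j : ℕ, C ^ (k + j)) = C ^ k * (1 - C)⁻¹ := by
      simp_rw [pow_add]
      rw [ENNReal.tsum_mul_left, ENNReal.tsum_geometric]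
    rw [ENNReal.tsum_mul_right, h1, hMdef, mul_assoc]
  have hgap : ∀ k l, k ≤ l →
      (∫⁻ x, (‖F k x - F l x‖₊ : ℝ≥0∞) ^ q ∂μ) ≤ C ^ k * M := by
    intro k l hkl
    obtain ⟨r, rfl⟩ := Nat.exists_eq_add_of_le hkl
    have key : ∀ r : ℕ, (∫⁻ x, (‖F k x - F (k + r) x‖₊ : ℝ≥0∞) ^ q ∂μ) ≤
        ∑ j ∈ Finset.range r, C ^ (k + j) * D0 := by
      intro r
      induction r with
      | zero => simp [ENNReal.zero_rpow_of_pos hq0]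
      | succ r ih =>
        refine le_trans (hTri (F k) (F (k + r)) (F (k + r + 1)) (hFSM k) (hFSM (k+r))) ?_
        rw [Finset.sum_range_succ]
        exact add_le_add ih (hDk (k + r))
    refine le_trans (key r) (le_trans ?_ (hgeom k))
    exact ENNReal.sum_le_tsum _
  -- a.e. convergence of the iterates
  have htsumfin : (∫⁻ x, ∑' k, (‖F k x - F (k+1) x‖₊ : ℝ≥0∞) ^ q ∂μ) ≠ ⊤ := by
    have hmk : ∀ k : ℕ, AEMeasurable (fun x => (‖F k x - F (k+1) x‖₊ : ℝ≥0∞) ^ q) μ :=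
      fun k => (((hFSM k).sub (hFSM (k+1))).enorm.pow_const q).aemeasurable
    rw [lintegral_tsum hmk]
    refine ne_top_of_le_ne_top (ne_of_lt ?_) (ENNReal.tsum_le_tsum fun k => hDk k)
    calc (∑' k : ℕ, C ^ k * D0) ≤ C ^ 0 * M := by simpa using hgeom 0
      _ < ⊤ := by rw [pow_zero, one_mul]; exact hMfin
  have haesum : ∀ᵐ x ∂μ, (∑' k, (‖F k x - F (k+1) x‖₊ : ℝ≥0∞) ^ q) ≠ ⊤ := by
    filter_upwards [ae_lt_top' (Measurable.aemeasurable (by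
      exact Measurable.ennreal_tsum fun k => ((hFSM k).sub (hFSM (k+1))).enorm.pow_const q))
      htsumfin] with x hx
    exact hx.ne
  have haeconv : ∀ᵐ x ∂μ, ∃ l : Y, Tendsto (fun k => F k x) atTop (𝓝 l) := by
    filter_upwards [haesum] with x hx
    set a : ℕ → ℝ := fun k => ‖F k x - F (k+1) x‖ with hadef
    have ha0 : ∀ k, 0 ≤ a k := fun k => norm_nonneg _
    have h2 : Summable (fun k => (‖F k x - F (k+1) x‖₊ : ℝ≥0) ^ q) := by
      refine ENNReal.tsum_coe_ne_top_iff_summable.1 ?_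
      refine ne_top_of_le_ne_top hx (le_of_eq (tsum_congr fun k => ?_))
      exact ENNReal.coe_rpow_of_nonneg _ hq0.le
    have h3 : Summable (fun k => a k ^ q) := by
      have := NNReal.summable_coe.2 h2
      refine this.congr fun k => ?_
      rw [NNReal.coe_rpow, coe_nnnorm]
    have h4 : Summable a := by
      have hto : Tendsto (fun k => a k ^ q) atTop (𝓝 0) := h3.tendsto_atTop_zero
      have hev : ∀ᶠ k in atTop, ‖a k‖ ≤ a k ^ q := by
        have hev1 : ∀ᶠ k in atTop, a k ^ q < 1 :=
          hto.eventually (gt_mem_nhds one_pos)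
        filter_upwards [hev1] with k hk
        rw [Real.norm_of_nonneg (ha0 k)]
        rcases eq_or_lt_of_le (ha0 k) with heq | hpos
        · rw [← heq, Real.zero_rpow hq0.ne']
        · have hle1 : a k ≤ 1 := by
            by_contra hgt
            push_neg at hgt
            have : (1 : ℝ) < a k ^ q :=
              (Real.one_lt_rpow_iff_of_pos hpos).2 (Or.inl ⟨hgt, hq0⟩)
            linarith
          calc a k = a k ^ (1 : ℝ) := (Real.rpow_one _).symm
            _ ≤ a k ^ q := Real.rpow_le_rpow_of_exponent_ge hpos hle1 hq1
      exact Summable.of_norm_bounded_eventually_nat h3 hev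
    have h5 : Summable (fun k => F k x - F (k+1) x) := h4.of_norm
    have h6 : Summable (fun k => F (k+1) x - F k x) := by
      have := h5.neg
      refine this.congr fun k => ?_
      abel
    refine ⟨F 0 x + ∑' k, (F (k+1) x - F k x), ?_⟩
    have h7 := h6.hasSum.tendsto_sum_nat
    have h8 : ∀ k : ℕ, F k x = F 0 x + ∑ j ∈ Finset.range k, (F (j+1) x - F j x) := by
      intro k
      rw [Finset.sum_range_sub (fun j => F j x), add_sub_cancel]
    have h9 : Tendsto (fun k => F 0 x + ∑ j ∈ Finset.range k, (F (j+1) x - F j x)) atTop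
        (𝓝 (F 0 x + ∑' k, (F (k+1) x - F k x))) := tendsto_const_nhds.add h7
    exact h9.congr fun k => (h8 k).symm
  obtain ⟨flim, hflimSM, hflimtend⟩ :=
    exists_stronglyMeasurable_limit_of_tendsto_ae
      (fun k => (hFSM k).aestronglyMeasurable) haeconv
  -- d_p(F k, flim) ≤ C^k * M
  have hdist : ∀ k, (∫⁻ x, (‖F k x - flim x‖₊ : ℝ≥0∞) ^ q ∂μ) ≤ C ^ k * M := by
    intro k
    have haeq : ∀ᵐ x ∂μ, (‖F k x - flim x‖₊ : ℝ≥0∞) ^ q =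
        liminf (fun l => (‖F k x - F l x‖₊ : ℝ≥0∞) ^ q) atTop := by
      filter_upwards [hflimtend] with x hx
      have htd : Tendsto (fun l => (‖F k x - F l x‖₊ : ℝ≥0∞) ^ q) atTop
          (𝓝 ((‖F k x - flim x‖₊ : ℝ≥0∞) ^ q)) := by
        refine Filter.Tendsto.ennrpow_const q ?_
        have hcont : Continuous (fun y : Y => (‖F k x - y‖₊ : ℝ≥0∞)) :=
          ENNReal.continuous_coe.comp (continuous_const.sub continuous_id).nnnorm
        exact (hcont.tendsto (flim x)).comp hx
      exact htd.liminf_eq.symm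
    calc (∫⁻ x, (‖F k x - flim x‖₊ : ℝ≥0∞) ^ q ∂μ)
        = ∫⁻ x, liminf (fun l => (‖F k x - F l x‖₊ : ℝ≥0∞) ^ q) atTop ∂μ :=
          lintegral_congr_ae haeq
      _ ≤ liminf (fun l => ∫⁻ x, (‖F k x - F l x‖₊ : ℝ≥0∞) ^ q ∂μ) atTop :=
          lintegral_liminf_le fun l => ((hFSM k).sub (hFSM l)).enorm.pow_const q
      _ ≤ C ^ k * M := by
          refine liminf_le_of_frequently_le' ?_
          refine Eventually.frequently ?_
          filter_upwards [eventually_ge_atTop k] with l hl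
          exact hgap k l hl
  have hdtend : Tendsto (fun k : ℕ => C ^ k * M) atTop (𝓝 0) := by
    have h1 : Tendsto (fun k : ℕ => C ^ k) atTop (𝓝 0) :=
      ENNReal.tendsto_pow_atTop_nhds_zero_of_lt_one hC1
    have := ENNReal.Tendsto.mul_const h1 (Or.inr hMfin.ne)
    simpa using this
  -- flim ∈ L^p
  have hflimint : (∫⁻ x, (‖flim x‖₊ : ℝ≥0∞) ^ q ∂μ) < ⊤ := by
    have h0 := hdist 0
    simp only [pow_zero, one_mul, hF0] at h0
    have : (∫⁻ x, (‖flim x‖₊ : ℝ≥0∞) ^ q ∂μ) ≤ M := by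
      refine le_trans (le_of_eq (lintegral_congr fun x => ?_)) h0
      rw [Pi.zero_apply, zero_sub, nnnorm_neg]
    exact lt_of_le_of_lt this hMfin
  have hflimLp : MemLp flim p μ := hmemiff _ hflimSM.aestronglyMeasurable hflimint
  -- Φ flim = flim a.e.
  have hfix : Φ flim =ᵐ[μ] flim := by
    have hzero : (∫⁻ x, (‖Φ flim x - flim x‖₊ : ℝ≥0∞) ^ q ∂μ) = 0 := by
      have hub : ∀ k : ℕ, (∫⁻ x, (‖Φ flim x - flim x‖₊ : ℝ≥0∞) ^ q ∂μ) ≤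
          (C * (C ^ k * M)) + C ^ (k+1) * M := by
        intro k
        refine le_trans (hTri (Φ flim) (F (k+1)) flim (hSMΦ flim hflimSM) (hFSM (k+1))) ?_
        refine add_le_add ?_ (hdist (k+1))
        have h1 : (∫⁻ x, (‖Φ flim x - F (k+1) x‖₊ : ℝ≥0∞) ^ q ∂μ) ≤
            C * ∫⁻ x, (‖flim x - F k x‖₊ : ℝ≥0∞) ^ q ∂μ := by
          rw [hFS k]
          exact hcontr _ _ hflimSM (hFSM k)
        refine le_trans h1 (mul_le_mul_right ?_ _)
        refine le_trans (le_of_eq (lintegral_congr fun x => ?_)) (hdist k)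
        rw [← nnnorm_neg]
        congr 1
        abel
      have htend2 : Tendsto (fun k : ℕ => (C * (C ^ k * M)) + C ^ (k+1) * M) atTop (𝓝 0) := by
        have h1 : Tendsto (fun k : ℕ => C * (C ^ k * M)) atTop (𝓝 0) := by
          have := ENNReal.Tendsto.const_mul hdtend (Or.inr hCtop)
          simpa using this
        have h2 : Tendsto (fun k : ℕ => C ^ (k+1) * M) atTop (𝓝 0) :=
          hdtend.comp (tendsto_add_atTop_nat 1)
        simpa using h1.add h2
      have := ge_of_tendsto' htend2 (fun k => hub k)
      exact le_antisymm this zero_le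
    have hmeas : Measurable fun x => (‖Φ flim x - flim x‖₊ : ℝ≥0∞) ^ q :=
      ((hSMΦ flim hflimSM).sub hflimSM).enorm.pow_const q
    have := (lintegral_eq_zero_iff hmeas).1 hzero
    filter_upwards [this] with x hx
    simp only [Pi.zero_apply] at hx
    rw [ENNReal.rpow_eq_zero_iff] at hx
    rcases hx with ⟨hx0, _⟩ | ⟨hxt, _⟩
    · have : ‖Φ flim x - flim x‖₊ = 0 := by exact_mod_cast hx0
      rw [nnnorm_eq_zero] at this
      exact sub_eq_zero.1 this
    · exact absurd hxt ENNReal.coe_ne_top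
  refine ⟨flim, hflimSM, hflimLp, hfix, ?_⟩
  -- uniqueness
  intro f' hf'SM hf'Lp hf'fix
  have hfin : (∫⁻ x, (‖f' x - flim x‖₊ : ℝ≥0∞) ^ q ∂μ) < ⊤ :=
    hDfin _ _ hf'SM hf'Lp hflimLp
  have heqΦ : (∫⁻ x, (‖f' x - flim x‖₊ : ℝ≥0∞) ^ q ∂μ) =
      ∫⁻ x, (‖Φ f' x - Φ flim x‖₊ : ℝ≥0∞) ^ q ∂μ := by
    refine lintegral_congr_ae ?_
    filter_upwards [hf'fix, hfix] with x h1 h2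
    rw [h1, h2]
  have hle : (∫⁻ x, (‖f' x - flim x‖₊ : ℝ≥0∞) ^ q ∂μ) ≤
      C * ∫⁻ x, (‖f' x - flim x‖₊ : ℝ≥0∞) ^ q ∂μ :=
    heqΦ.trans_le (hcontr _ _ hf'SM hflimSM)
  have hzero : (∫⁻ x, (‖f' x - flim x‖₊ : ℝ≥0∞) ^ q ∂μ) = 0 := by
    by_contra hne
    have hlt : C * (∫⁻ x, (‖f' x - flim x‖₊ : ℝ≥0∞) ^ q ∂μ) <
        1 * ∫⁻ x, (‖f' x - flim x‖₊ : ℝ≥0∞) ^ q ∂μ :=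
      ENNReal.mul_lt_mul_left hne hfin.ne hC1
    rw [one_mul] at hlt
    exact absurd (lt_of_le_of_lt hle hlt) (lt_irrefl _)
  have hmeas : Measurable fun x => (‖f' x - flim x‖₊ : ℝ≥0∞) ^ q :=
    (hf'SM.sub hflimSM).enorm.pow_const q
  have := (lintegral_eq_zero_iff hmeas).1 hzero
  filter_upwards [this] with x hx
  simp only [Pi.zero_apply] at hx
  rw [ENNReal.rpow_eq_zero_iff] at hx
  rcases hx with ⟨hx0, _⟩ | ⟨hxt, _⟩
  · have : ‖f' x - flim x‖₊ = 0 := by exact_mod_cast hx0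
    rw [nnnorm_eq_zero] at this
    exact sub_eq_zero.1 this
  · exact absurd hxt ENNReal.coe_ne_top
end

section
/- Assume the s_j and t_i are essentially bounded and that max_{j=1,…,m} ‖s_j‖_{L^∞(K_j)} + max_{i=1,…,n} ‖t_i‖_{L^∞(V_i)} < 1. Then the affine RB operator Φ maps L^∞(X,μ;Y) into itself and is a contraction on L^∞(X,μ;Y): ‖Φg − Φh‖_{L^∞} ≤ ( max_j ‖s_j‖_{L^∞} + max_i ‖t_i‖_{L^∞} )·‖g − h‖_{L^∞} for all g,h ∈ L^∞(X,μ;Y); hence Φ has a unique fixed point in L^∞(X,μ;Y). -/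
open MeasureTheory ENNReal

/-- If `max_j ‖s_j‖_{L^∞(K_j)} + max_i ‖t_i‖_{L^∞(V_i)} < 1`, the affine RB
operator `Φ` maps `L^∞(X,μ;Y)` into itself and is a contraction on `L^∞(X,μ;Y)` with constant
`max_j ‖s_j‖_{L^∞} + max_i ‖t_i‖_{L^∞}`; hence it has a unique fixed point in `L^∞(X,μ;Y)`. -/
theorem affine_RB_contraction_on_Linfty {X Y : Type*} [MeasurableSpace X]
    (μ : Measure X) [NormedAddCommGroup Y] [NormedSpace ℝ Y] [CompleteSpace Y]
    {m n : ℕ} (Kj : Fin m → Set X) (V : Fin n → Set X)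
    (hKm : ∀ j, MeasurableSet (Kj j)) (hVm : ∀ i, MeasurableSet (V i))
    (b : Fin m → X → X) (u : Fin n → X → X)
    (hbinj : ∀ j, Set.InjOn (b j) (Kj j)) (huinj : ∀ i, Set.InjOn (u i) (V i))
    (hBm : ∀ j, MeasurableSet (b j '' Kj j)) (hUm : ∀ i, MeasurableSet (u i '' V i))
    -- measurable inverses
    (c : Fin m → X → X) (d : Fin n → X → X)
    (hc : ∀ j, Measurable (c j)) (hd : ∀ i, Measurable (d i))
    (hcb : ∀ j, ∀ x ∈ Kj j, c j (b j x) = x) (hdu : ∀ i, ∀ x ∈ V i, d i (u i x) = x)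
    (hcover : ((⋃ j, b j '' Kj j) ∪ ⋃ i, u i '' V i) = Set.univ)
    (hdisj : Pairwise (Function.onFun Disjoint
      (Sum.elim (fun j : Fin m => b j '' Kj j) (fun i : Fin n => u i '' V i))))
    (Jb : Fin m → NNReal) (Ju : Fin n → NNReal)
    (hJb : ∀ j, ∀ A : Set X, MeasurableSet A → A ⊆ Kj j → μ (b j '' A) ≤ Jb j * μ A)
    (hJu : ∀ i, ∀ A : Set X, MeasurableSet A → A ⊆ V i → μ (u i '' A) ≤ Ju i * μ A)
    (P : Fin m → X → Y) (Q : Fin n → X → Y) (S : Fin m → X → ℝ) (T : Fin n → X → ℝ)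
    (hPm : ∀ j, StronglyMeasurable (P j)) (hQm : ∀ i, StronglyMeasurable (Q i))
    (hSm : ∀ j, Measurable (S j)) (hTm : ∀ i, Measurable (T i))
    (hP : ∀ j, MemLp (P j) ⊤ (μ.restrict (Kj j))) (hQ : ∀ i, MemLp (Q i) ⊤ (μ.restrict (V i)))
    (hSess : ∀ j, eLpNorm (S j) ⊤ (μ.restrict (Kj j)) ≠ ⊤)
    (hTess : ∀ i, eLpNorm (T i) ⊤ (μ.restrict (V i)) ≠ ⊤)
    (hC : (⨆ j, eLpNorm (S j) ⊤ (μ.restrict (Kj j)))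
        + (⨆ i, eLpNorm (T i) ⊤ (μ.restrict (V i))) < 1)
    (Φ : (X → Y) → (X → Y))
    (hΦb : ∀ f : X → Y, ∀ j, ∀ x ∈ Kj j, Φ f (b j x) = P j x + S j x • f x)
    (hΦu : ∀ f : X → Y, ∀ i, ∀ x ∈ V i, Φ f (u i x) = Q i x + T i x • f x) :
    (∀ f : X → Y, StronglyMeasurable f → MemLp f ⊤ μ → MemLp (Φ f) ⊤ μ) ∧
    (∀ g h : X → Y, StronglyMeasurable g → StronglyMeasurable h →
      MemLp g ⊤ μ → MemLp h ⊤ μ →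
      eLpNorm (fun x => Φ g x - Φ h x) ⊤ μ ≤
        ((⨆ j, eLpNorm (S j) ⊤ (μ.restrict (Kj j)))
          + (⨆ i, eLpNorm (T i) ⊤ (μ.restrict (V i))))
        * eLpNorm (fun x => g x - h x) ⊤ μ) ∧
    (∃ f : X → Y, StronglyMeasurable f ∧ MemLp f ⊤ μ ∧ Φ f =ᵐ[μ] f ∧
      ∀ f' : X → Y, StronglyMeasurable f' → MemLp f' ⊤ μ → Φ f' =ᵐ[μ] f' → f' =ᵐ[μ] f) := by
  classical
  set Cs := (⨆ j, eLpNorm (S j) ⊤ (μ.restrict (Kj j))) with hCsdef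
  set Ct := (⨆ i, eLpNorm (T i) ⊤ (μ.restrict (V i))) with hCtdef
  set C := Cs + Ct with hCdef
  have hCne : C ≠ ⊤ := (hC.trans ENNReal.one_lt_top).ne
  have hCsle : Cs ≤ C := le_self_add
  have hCtle : Ct ≤ C := le_add_self
  -- cover: every point is in some image
  have hmem : ∀ y : X, (∃ j, ∃ x ∈ Kj j, b j x = y) ∨ (∃ i, ∃ x ∈ V i, u i x = y) := by
    intro y
    have hy : y ∈ ((⋃ j, b j '' Kj j) ∪ ⋃ i, u i '' V i) := by
      rw [hcover]; exact Set.mem_univ y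
    rcases hy with hy | hy
    · obtain ⟨j, hj⟩ := Set.mem_iUnion.1 hy
      obtain ⟨x, hx, hbx⟩ := hj
      exact Or.inl ⟨j, x, hx, hbx⟩
    · obtain ⟨i, hi⟩ := Set.mem_iUnion.1 hy
      obtain ⟨x, hx, hux⟩ := hi
      exact Or.inr ⟨i, x, hx, hux⟩
  -- transfer of a.e. properties from the pieces to the whole space
  have key : ∀ (pj : Fin m → X → Prop) (qi : Fin n → X → Prop),
      (∀ j, ∀ᵐ x ∂(μ.restrict (Kj j)), pj j x) →
      (∀ i, ∀ᵐ x ∂(μ.restrict (V i)), qi i x) →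
      ∀ᵐ y ∂μ, (∀ j, ∀ x ∈ Kj j, b j x = y → pj j x) ∧
               (∀ i, ∀ x ∈ V i, u i x = y → qi i x) := by
    intro pj qi hpj hqi
    have hA : ∀ j, ∃ A : Set X, μ (b j '' A) = 0 ∧ ∀ x ∈ Kj j, ¬ pj j x → x ∈ A := by
      intro j
      have hN0 : μ.restrict (Kj j) {x | ¬ pj j x} = 0 := by
        simpa [ae_iff] using hpj j
      set M := toMeasurable (μ.restrict (Kj j)) {x | ¬ pj j x} with hM
      have hMm : MeasurableSet M := measurableSet_toMeasurable _ _
      have hM0 : μ (M ∩ Kj j) = 0 := by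
        have h1 : μ.restrict (Kj j) M = 0 := by
          rw [hM, measure_toMeasurable]; exact hN0
        rwa [Measure.restrict_apply hMm] at h1
      refine ⟨M ∩ Kj j, le_antisymm ?_ zero_le, fun x hx hpx =>
        ⟨subset_toMeasurable _ _ hpx, hx⟩⟩
      calc μ (b j '' (M ∩ Kj j)) ≤ Jb j * μ (M ∩ Kj j) :=
            hJb j _ (hMm.inter (hKm j)) Set.inter_subset_right
        _ = 0 := by rw [hM0, mul_zero]
    have hB : ∀ i, ∃ A : Set X, μ (u i '' A) = 0 ∧ ∀ x ∈ V i, ¬ qi i x → x ∈ A := by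
      intro i
      have hN0 : μ.restrict (V i) {x | ¬ qi i x} = 0 := by
        simpa [ae_iff] using hqi i
      set M := toMeasurable (μ.restrict (V i)) {x | ¬ qi i x} with hM
      have hMm : MeasurableSet M := measurableSet_toMeasurable _ _
      have hM0 : μ (M ∩ V i) = 0 := by
        have h1 : μ.restrict (V i) M = 0 := by
          rw [hM, measure_toMeasurable]; exact hN0
        rwa [Measure.restrict_apply hMm] at h1
      refine ⟨M ∩ V i, le_antisymm ?_ zero_le, fun x hx hpx =>
        ⟨subset_toMeasurable _ _ hpx, hx⟩⟩
      calc μ (u i '' (M ∩ V i)) ≤ Ju i * μ (M ∩ V i) :=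
            hJu i _ (hMm.inter (hVm i)) Set.inter_subset_right
        _ = 0 := by rw [hM0, mul_zero]
    choose A hA0 hAmem using hA
    choose B hB0 hBmem using hB
    have hnull : μ ((⋃ j, b j '' A j) ∪ ⋃ i, u i '' B i) = 0 :=
      measure_union_null (measure_iUnion_null hA0) (measure_iUnion_null hB0)
    filter_upwards [measure_eq_zero_iff_ae_notMem.mp hnull] with y hy
    constructor
    · intro j x hx hbx
      by_contra hp
      exact hy (Set.mem_union_left _ (Set.mem_iUnion.2 ⟨j, ⟨x, hAmem j x hx hp, hbx⟩⟩))
    · intro i x hx hux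
      by_contra hp
      exact hy (Set.mem_union_right _ (Set.mem_iUnion.2 ⟨i, ⟨x, hBmem i x hx hp, hux⟩⟩))
  -- core contraction estimate (no measurability needed)
  have hcontr : ∀ g h : X → Y,
      eLpNorm (fun x => Φ g x - Φ h x) ⊤ μ ≤ C * eLpNorm (fun x => g x - h x) ⊤ μ := by
    intro g h
    set D := eLpNorm (fun x => g x - h x) ⊤ μ with hD
    have h1 : ∀ j, ∀ᵐ x ∂(μ.restrict (Kj j)),
        (‖S j x‖₊ : ℝ≥0∞) ≤ Cs ∧ (‖g x - h x‖₊ : ℝ≥0∞) ≤ D := by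
      intro j
      filter_upwards [ae_le_eLpNormEssSup (f := S j) (μ := μ.restrict (Kj j)),
        ae_restrict_of_ae (ae_le_eLpNormEssSup (f := fun x => g x - h x) (μ := μ))]
        with x hx1 hx2
      refine ⟨hx1.trans ?_, hx2.trans ?_⟩
      · rw [hCsdef]
        exact (eLpNorm_exponent_top (f := S j)).symm.le.trans
          (le_iSup (fun j => eLpNorm (S j) ⊤ (μ.restrict (Kj j))) j)
      · rw [hD, eLpNorm_exponent_top]
    have h2 : ∀ i, ∀ᵐ x ∂(μ.restrict (V i)),
        (‖T i x‖₊ : ℝ≥0∞) ≤ Ct ∧ (‖g x - h x‖₊ : ℝ≥0∞) ≤ D := by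
      intro i
      filter_upwards [ae_le_eLpNormEssSup (f := T i) (μ := μ.restrict (V i)),
        ae_restrict_of_ae (ae_le_eLpNormEssSup (f := fun x => g x - h x) (μ := μ))]
        with x hx1 hx2
      refine ⟨hx1.trans ?_, hx2.trans ?_⟩
      · rw [hCtdef]
        exact (eLpNorm_exponent_top (f := T i)).symm.le.trans
          (le_iSup (fun i => eLpNorm (T i) ⊤ (μ.restrict (V i))) i)
      · rw [hD, eLpNorm_exponent_top]
    have hae : ∀ᵐ y ∂μ, (‖Φ g y - Φ h y‖₊ : ℝ≥0∞) ≤ C * D := by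
      filter_upwards [key _ _ h1 h2] with y hy
      rcases hmem y with ⟨j, x, hx, hbx⟩ | ⟨i, x, hx, hux⟩
      · have hS := (hy.1 j x hx hbx).1
        have hgh := (hy.1 j x hx hbx).2
        have heq : Φ g y - Φ h y = S j x • (g x - h x) := by
          rw [← hbx, hΦb g j x hx, hΦb h j x hx, smul_sub]
          abel
        rw [heq]
        calc (‖S j x • (g x - h x)‖₊ : ℝ≥0∞)
            = (‖S j x‖₊ : ℝ≥0∞) * (‖g x - h x‖₊ : ℝ≥0∞) := by
              rw [nnnorm_smul, ENNReal.coe_mul]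
          _ ≤ Cs * D := mul_le_mul' hS hgh
          _ ≤ C * D := mul_le_mul_left hCsle D
      · have hT := (hy.2 i x hx hux).1
        have hgh := (hy.2 i x hx hux).2
        have heq : Φ g y - Φ h y = T i x • (g x - h x) := by
          rw [← hux, hΦu g i x hx, hΦu h i x hx, smul_sub]
          abel
        rw [heq]
        calc (‖T i x • (g x - h x)‖₊ : ℝ≥0∞)
            = (‖T i x‖₊ : ℝ≥0∞) * (‖g x - h x‖₊ : ℝ≥0∞) := by
              rw [nnnorm_smul, ENNReal.coe_mul]
          _ ≤ Ct * D := mul_le_mul' hT hgh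
          _ ≤ C * D := mul_le_mul_left hCtle D
    rw [eLpNorm_exponent_top]
    exact essSup_le_of_ae_le _ hae
  -- Φ respects a.e. equality
  have hΦcongr : ∀ f f' : X → Y, f =ᵐ[μ] f' → Φ f =ᵐ[μ] Φ f' := by
    intro f f' hff
    have h1 : ∀ j : Fin m, ∀ᵐ x ∂(μ.restrict (Kj j)), f x = f' x :=
      fun j => ae_restrict_of_ae hff
    have h2 : ∀ i : Fin n, ∀ᵐ x ∂(μ.restrict (V i)), f x = f' x :=
      fun i => ae_restrict_of_ae hff
    filter_upwards [key _ _ h1 h2] with y hy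
    rcases hmem y with ⟨j, x, hx, hbx⟩ | ⟨i, x, hx, hux⟩
    · rw [← hbx, hΦb f j x hx, hΦb f' j x hx, hy.1 j x hx hbx]
    · rw [← hux, hΦu f i x hx, hΦu f' i x hx, hy.2 i x hx hux]
  -- strong measurability of Φ f
  have hΦsm : ∀ f : X → Y, StronglyMeasurable f → StronglyMeasurable (Φ f) := by
    intro f hf
    have hG : Φ f = fun y =>
        (∑ j, (b j '' Kj j).indicator (fun z => P j (c j z) + S j (c j z) • f (c j z)) y)
        + ∑ i, (u i '' V i).indicator (fun z => Q i (d i z) + T i (d i z) • f (d i z)) y := by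
      funext y
      rcases hmem y with ⟨j0, x, hx, hbx⟩ | ⟨i0, x, hx, hux⟩
      · have hyin : y ∈ b j0 '' Kj j0 := ⟨x, hx, hbx⟩
        have hsum2 : (∑ i, (u i '' V i).indicator
            (fun z => Q i (d i z) + T i (d i z) • f (d i z)) y) = 0 := by
          refine Finset.sum_eq_zero fun i _ => Set.indicator_of_notMem ?_ _
          intro hyu
          exact Set.disjoint_left.1
            (hdisj (show (Sum.inl j0 : Fin m ⊕ Fin n) ≠ Sum.inr i by simp)) hyin hyu
        rw [hsum2, add_zero, Finset.sum_eq_single j0]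
        · rw [Set.indicator_of_mem hyin, ← hbx, hcb j0 x hx, hΦb f j0 x hx]
        · intro j _ hj
          refine Set.indicator_of_notMem (fun hyj => ?_) _
          exact Set.disjoint_left.1
            (hdisj (show (Sum.inl j : Fin m ⊕ Fin n) ≠ Sum.inl j0 by simp [hj])) hyj hyin
        · intro hj; exact absurd (Finset.mem_univ j0) hj
      · have hyin : y ∈ u i0 '' V i0 := ⟨x, hx, hux⟩
        have hsum1 : (∑ j, (b j '' Kj j).indicator
            (fun z => P j (c j z) + S j (c j z) • f (c j z)) y) = 0 := by
          refine Finset.sum_eq_zero fun j _ => Set.indicator_of_notMem ?_ _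
          intro hyb
          exact Set.disjoint_left.1
            (hdisj (show (Sum.inl j : Fin m ⊕ Fin n) ≠ Sum.inr i0 by simp)) hyb hyin
        rw [hsum1, zero_add, Finset.sum_eq_single i0]
        · rw [Set.indicator_of_mem hyin, ← hux, hdu i0 x hx, hΦu f i0 x hx]
        · intro i _ hi
          refine Set.indicator_of_notMem (fun hyi => ?_) _
          exact Set.disjoint_left.1
            (hdisj (show (Sum.inr i : Fin m ⊕ Fin n) ≠ Sum.inr i0 by simp [hi])) hyi hyin
        · intro hi; exact absurd (Finset.mem_univ i0) hi
    rw [hG]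
    refine StronglyMeasurable.add ?_ ?_
    · refine Finset.stronglyMeasurable_fun_sum _ fun j _ => ?_
      refine StronglyMeasurable.indicator ?_ (hBm j)
      exact ((hPm j).comp_measurable (hc j)).add
        ((((hSm j).comp (hc j)).stronglyMeasurable).smul (hf.comp_measurable (hc j)))
    · refine Finset.stronglyMeasurable_fun_sum _ fun i _ => ?_
      refine StronglyMeasurable.indicator ?_ (hUm i)
      exact ((hQm i).comp_measurable (hd i)).add
        ((((hTm i).comp (hd i)).stronglyMeasurable).smul (hf.comp_measurable (hd i)))
  -- Φ maps L∞ into itself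
  have hmemℒp : ∀ f : X → Y, StronglyMeasurable f → MemLp f ⊤ μ → MemLp (Φ f) ⊤ μ := by
    intro f hfsm hf
    refine ⟨(hΦsm f hfsm).aestronglyMeasurable, ?_⟩
    set CP := (⨆ j, eLpNorm (P j) ⊤ (μ.restrict (Kj j))) with hCP
    set CQ := (⨆ i, eLpNorm (Q i) ⊤ (μ.restrict (V i))) with hCQ
    set Df := eLpNorm f ⊤ μ with hDf
    have hCPlt : CP < ⊤ := by
      refine lt_of_le_of_lt (iSup_le fun j => Finset.single_le_sum
        (f := fun j => eLpNorm (P j) ⊤ (μ.restrict (Kj j)))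
        (fun i _ => zero_le) (Finset.mem_univ j)) ?_
      exact ENNReal.sum_lt_top.2 fun j _ => (hP j).2
    have hCQlt : CQ < ⊤ := by
      refine lt_of_le_of_lt (iSup_le fun i => Finset.single_le_sum
        (f := fun i => eLpNorm (Q i) ⊤ (μ.restrict (V i)))
        (fun i _ => zero_le) (Finset.mem_univ i)) ?_
      exact ENNReal.sum_lt_top.2 fun i _ => (hQ i).2
    set M := CP + CQ + C * Df with hM
    have hMlt : M < ⊤ := by
      rw [hM]
      exact ENNReal.add_lt_top.2 ⟨ENNReal.add_lt_top.2 ⟨hCPlt, hCQlt⟩,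
        ENNReal.mul_lt_top hCne.lt_top hf.2⟩
    have h1 : ∀ j, ∀ᵐ x ∂(μ.restrict (Kj j)),
        (‖P j x‖₊ : ℝ≥0∞) ≤ CP ∧ (‖S j x‖₊ : ℝ≥0∞) ≤ Cs ∧ (‖f x‖₊ : ℝ≥0∞) ≤ Df := by
      intro j
      filter_upwards [ae_le_eLpNormEssSup (f := P j) (μ := μ.restrict (Kj j)),
        ae_le_eLpNormEssSup (f := S j) (μ := μ.restrict (Kj j)),
        ae_restrict_of_ae (ae_le_eLpNormEssSup (f := f) (μ := μ))] with x hx1 hx2 hx3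
      refine ⟨hx1.trans ?_, hx2.trans ?_, hx3.trans ?_⟩
      · rw [hCP]
        exact (eLpNorm_exponent_top (f := P j)).symm.le.trans
          (le_iSup (fun j => eLpNorm (P j) ⊤ (μ.restrict (Kj j))) j)
      · rw [hCsdef]
        exact (eLpNorm_exponent_top (f := S j)).symm.le.trans
          (le_iSup (fun j => eLpNorm (S j) ⊤ (μ.restrict (Kj j))) j)
      · rw [hDf, eLpNorm_exponent_top]
    have h2 : ∀ i, ∀ᵐ x ∂(μ.restrict (V i)),
        (‖Q i x‖₊ : ℝ≥0∞) ≤ CQ ∧ (‖T i x‖₊ : ℝ≥0∞) ≤ Ct ∧ (‖f x‖₊ : ℝ≥0∞) ≤ Df := by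
      intro i
      filter_upwards [ae_le_eLpNormEssSup (f := Q i) (μ := μ.restrict (V i)),
        ae_le_eLpNormEssSup (f := T i) (μ := μ.restrict (V i)),
        ae_restrict_of_ae (ae_le_eLpNormEssSup (f := f) (μ := μ))] with x hx1 hx2 hx3
      refine ⟨hx1.trans ?_, hx2.trans ?_, hx3.trans ?_⟩
      · rw [hCQ]
        exact (eLpNorm_exponent_top (f := Q i)).symm.le.trans
          (le_iSup (fun i => eLpNorm (Q i) ⊤ (μ.restrict (V i))) i)
      · rw [hCtdef]
        exact (eLpNorm_exponent_top (f := T i)).symm.le.trans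
          (le_iSup (fun i => eLpNorm (T i) ⊤ (μ.restrict (V i))) i)
      · rw [hDf, eLpNorm_exponent_top]
    have hae : ∀ᵐ y ∂μ, (‖Φ f y‖₊ : ℝ≥0∞) ≤ M := by
      filter_upwards [key _ _ h1 h2] with y hy
      rcases hmem y with ⟨j, x, hx, hbx⟩ | ⟨i, x, hx, hux⟩
      · obtain ⟨hP', hS', hf'⟩ := hy.1 j x hx hbx
        rw [← hbx, hΦb f j x hx]
        calc (‖P j x + S j x • f x‖₊ : ℝ≥0∞)
            ≤ (‖P j x‖₊ : ℝ≥0∞) + (‖S j x • f x‖₊ : ℝ≥0∞) := by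
              exact_mod_cast nnnorm_add_le _ _
          _ = (‖P j x‖₊ : ℝ≥0∞) + (‖S j x‖₊ : ℝ≥0∞) * (‖f x‖₊ : ℝ≥0∞) := by
              rw [nnnorm_smul, ENNReal.coe_mul]
          _ ≤ CP + Cs * Df := add_le_add hP' (mul_le_mul' hS' hf')
          _ ≤ M := by
              rw [hM]
              exact add_le_add le_self_add (mul_le_mul_left hCsle Df)
      · obtain ⟨hQ', hT', hf'⟩ := hy.2 i x hx hux
        rw [← hux, hΦu f i x hx]
        calc (‖Q i x + T i x • f x‖₊ : ℝ≥0∞)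
            ≤ (‖Q i x‖₊ : ℝ≥0∞) + (‖T i x • f x‖₊ : ℝ≥0∞) := by
              exact_mod_cast nnnorm_add_le _ _
          _ = (‖Q i x‖₊ : ℝ≥0∞) + (‖T i x‖₊ : ℝ≥0∞) * (‖f x‖₊ : ℝ≥0∞) := by
              rw [nnnorm_smul, ENNReal.coe_mul]
          _ ≤ CQ + Ct * Df := add_le_add hQ' (mul_le_mul' hT' hf')
          _ ≤ M := by
              rw [hM]
              exact add_le_add le_add_self (mul_le_mul_left hCtle Df)
    calc eLpNorm (Φ f) ⊤ μ = eLpNormEssSup (Φ f) μ := eLpNorm_exponent_top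
      _ ≤ M := essSup_le_of_ae_le _ hae
      _ < ⊤ := hMlt
  refine ⟨hmemℒp, fun g h _ _ _ _ => hcontr g h, ?_⟩
  -- fixed point via the Banach fixed point theorem on Lp
  haveI : Fact ((1 : ℝ≥0∞) ≤ ⊤) := ⟨le_top⟩
  haveI : Nonempty (Lp Y ⊤ μ) := ⟨0⟩
  set C' : NNReal := C.toNNReal with hC'
  have hCcoe : (C' : ℝ≥0∞) = C := ENNReal.coe_toNNReal hCne
  have hC'lt : C' < 1 := by
    rw [← ENNReal.coe_lt_one_iff, hCcoe]; exact hC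
  have hmemΦ : ∀ F : Lp Y ⊤ μ, MemLp (Φ F) ⊤ μ := fun F =>
    hmemℒp F (Lp.stronglyMeasurable F) (Lp.memLp F)
  set Ψ : Lp Y ⊤ μ → Lp Y ⊤ μ := fun F => (hmemΦ F).toLp (Φ F) with hΨ
  have hlip : LipschitzWith C' Ψ := by
    intro F G
    rw [Lp.edist_def, Lp.edist_def]
    have e1 : eLpNorm (⇑(Ψ F) - ⇑(Ψ G)) ⊤ μ = eLpNorm (fun x => Φ F x - Φ G x) ⊤ μ := by
      refine eLpNorm_congr_ae ?_
      filter_upwards [(hmemΦ F).coeFn_toLp, (hmemΦ G).coeFn_toLp] with x h1 h2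
      simp [hΨ, h1, h2]
    have e2 : eLpNorm (⇑F - ⇑G) ⊤ μ = eLpNorm (fun x => F x - G x) ⊤ μ := rfl
    rw [e1, e2, hCcoe]
    exact hcontr (⇑F) (⇑G)
  have hcw : ContractingWith C' Ψ := ⟨hC'lt, hlip⟩
  set F0 := ContractingWith.fixedPoint Ψ hcw with hF0
  have hfix : Ψ F0 = F0 := hcw.fixedPoint_isFixedPt
  have hΦF0 : Φ ⇑F0 =ᵐ[μ] ⇑F0 := by
    have h1 : ⇑(Ψ F0) =ᵐ[μ] Φ ⇑F0 := (hmemΦ F0).coeFn_toLp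
    have h2 : ⇑(Ψ F0) =ᵐ[μ] ⇑F0 := by rw [hfix]
    exact h1.symm.trans h2
  refine ⟨⇑F0, Lp.stronglyMeasurable F0, Lp.memLp F0, hΦF0, ?_⟩
  intro f' hf'sm hf'mem hf'fix
  set D := eLpNorm (fun x => f' x - F0 x) ⊤ μ with hDdef
  have hDlt : D < ⊤ := (hf'mem.sub (Lp.memLp F0)).2
  have heq : eLpNorm (fun x => Φ f' x - Φ ⇑F0 x) ⊤ μ = D := by
    refine eLpNorm_congr_ae ?_
    filter_upwards [hf'fix, hΦF0] with x h1 h2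
    rw [h1, h2]
  have hle : D ≤ C * D := by
    conv_lhs => rw [← heq]
    exact hcontr f' ⇑F0
  have hD0 : D = 0 := by
    by_contra hD
    have hlt : C * D < 1 * D := (ENNReal.mul_lt_mul_iff_left hD hDlt.ne).2 hC
    rw [one_mul] at hlt
    exact absurd (hle.trans_lt hlt) (lt_irrefl D)
  have hz := (eLpNorm_eq_zero_iff
    (hf'sm.aestronglyMeasurable.sub (Lp.stronglyMeasurable F0).aestronglyMeasurable)
    (by simp)).1 hD0
  filter_upwards [hz] with x hx
  exact sub_eq_zero.1 hx
end

section
/- Let f ∈ B(X,Y) be the unique fixed point of the RB operator Φ, and let G := {(x, f(x)) : x ∈ X} ⊆ X × Y be its graph. For ℓ = 1,…,m set X_ℓ := K_ℓ and h_ℓ(x,y) := (b_ℓ(x), v_ℓ(x,y)); for ℓ = m+1,…,m+n set X_ℓ := V_{ℓ−m} and h_ℓ(x,y) := (u_{ℓ−m}(x), w_{ℓ−m}(x,y)). Then G is a local attractor of the local IFS (X × Y, {h_ℓ : X_ℓ × Y → X × Y}_{ℓ=1}^{m+n}), i.e., G = ⋃_{ℓ=1}^{m+n} h_ℓ( G ∩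 (X_ℓ × Y) ). -/
/-!
A fixed point of the RB operator satisfies `f (b j x) = v j x (f x)` on `K j` and
`f (u i x) = w i x (f x)` on `V i`, so each map `h_ℓ` carries the part of the graph over its
domain onto the part of the graph over its image. Since the images of the `b j` and `u i` cover
`X`, these pieces together make up the whole graph.
-/

open Bornology Set

theorem image_graph_inter_prod_univ {X X' Y Y' : Type*} {f : X → Y} {g : X' → Y'}
    {s : Set X} {b : X → X'} {v : X → Y → Y'} (h : ∀ x ∈ s, g (b x) = v x (f x)) :
    (fun p : X × Y => (b p.1, v p.1 p.2)) '' ({p | p.2 = f p.1} ∩ s ×ˢ univ) =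
      {p | p.2 = g p.1} ∩ (b '' s) ×ˢ univ := by
  ext ⟨x', y'⟩
  simp only [mem_image, mem_inter_iff, mem_ofPred_eq, mem_prod, mem_univ, and_true, Prod.mk.injEq,
    Prod.exists]
  constructor
  · rintro ⟨x, _, ⟨rfl, hx⟩, rfl, rfl⟩
    exact ⟨(h x hx).symm, x, hx, rfl⟩
  · rintro ⟨rfl, x, hx, rfl⟩
    exact ⟨x, f x, ⟨rfl, hx⟩, rfl, (h x hx).symm⟩

theorem graph_is_local_attractor_general {X Y : Type*}
    {m n : ℕ} (K : Set X) (Kj : Fin m → Set X) (V : Fin n → Set X)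
    (b : Fin m → X → X) (u : Fin n → X → X)
    (hKcov : (⋃ j, b j '' Kj j) = K)
    (hVcov : (⋃ i, u i '' V i) = Set.univ \ K)
    (v : Fin m → X → Y → Y) (w : Fin n → X → Y → Y)
    (Φ : (X → Y) → (X → Y))
    (hΦb : ∀ f : X → Y, ∀ j, ∀ x ∈ Kj j, Φ f (b j x) = v j x (f x))
    (hΦu : ∀ f : X → Y, ∀ i, ∀ x ∈ V i, Φ f (u i x) = w i x (f x))
    (f : X → Y) (hfix : Φ f = f) :
    {pt : X × Y | pt.2 = f pt.1} =
      (⋃ j, (fun pt : X × Y => (b j pt.1, v j pt.1 pt.2)) ''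
        ({pt : X × Y | pt.2 = f pt.1} ∩ (Kj j) ×ˢ (Set.univ : Set Y))) ∪
      (⋃ i, (fun pt : X × Y => (u i pt.1, w i pt.1 pt.2)) ''
        ({pt : X × Y | pt.2 = f pt.1} ∩ (V i) ×ˢ (Set.univ : Set Y))) := by
  have hcover : (⋃ j, b j '' Kj j) ∪ (⋃ i, u i '' V i) = univ := by
    rw [hKcov, hVcov, union_sdiff_self, union_univ]
  have hfixb (j) : ∀ x ∈ Kj j, f (b j x) = v j x (f x) := fun x hx => by rw [← hΦb f j x hx, hfix]
  have hfixu (i) : ∀ x ∈ V i, f (u i x) = w i x (f x) := fun x hx => by rw [← hΦu f i x hx, hfix]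
  simp only [fun j => image_graph_inter_prod_univ (hfixb j),
    fun i => image_graph_inter_prod_univ (hfixu i), ← inter_iUnion, ← inter_union_distrib_left,
    ← iUnion_prod_const, ← union_prod, hcover, univ_prod_univ, inter_univ]

/-- Let `f` be the unique bounded fixed point of the RB operator `Φ` and let
`G := {(x, f x) : x ∈ X}` be its graph.  With the maps `h_j(x,y) := (b j x, v j x y)` on
`K j × Y` and `h_i(x,y) := (u i x, w i x y)` on `V i × Y`, the graph `G` is a local attractor
of the associated local IFS:  `G = ⋃_ℓ h_ℓ (G ∩ (X_ℓ × Y))`. -/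
theorem graph_is_local_attractor {X Y : Type*} [Nonempty X]
    [NormedAddCommGroup Y] [NormedSpace ℝ Y] [CompleteSpace Y]
    {m n : ℕ} (K : Set X) (Kj : Fin m → Set X) (V : Fin n → Set X)
    (b : Fin m → X → X) (u : Fin n → X → X)
    (hbinj : ∀ j, Set.InjOn (b j) (Kj j)) (huinj : ∀ i, Set.InjOn (u i) (V i))
    (hKcov : (⋃ j, b j '' Kj j) = K)
    (hVcov : (⋃ i, u i '' V i) = Set.univ \ K)
    (hdisj : Pairwise (Function.onFun Disjoint
      (Sum.elim (fun j : Fin m => b j '' Kj j) (fun i : Fin n => u i '' V i))))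
    (v : Fin m → X → Y → Y) (w : Fin n → X → Y → Y)
    (hvb : ∀ j y, IsBounded ((fun x => v j x y) '' Kj j))
    (hwb : ∀ i y, IsBounded ((fun x => w i x y) '' V i))
    (ℓ₁ ℓ₂ : ℝ) (hℓ₁0 : 0 ≤ ℓ₁) (hℓ₁ : ℓ₁ < 1) (hℓ₂0 : 0 ≤ ℓ₂) (hℓ₂ : ℓ₂ < 1)
    (hv : ∀ j, ∀ x ∈ Kj j, ∀ y₁ y₂ : Y, ‖v j x y₁ - v j x y₂‖ ≤ ℓ₁ * ‖y₁ - y₂‖)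
    (hw : ∀ i, ∀ x ∈ V i, ∀ y₁ y₂ : Y, ‖w i x y₁ - w i x y₂‖ ≤ ℓ₂ * ‖y₁ - y₂‖)
    (Φ : (X → Y) → (X → Y))
    (hΦb : ∀ f : X → Y, ∀ j, ∀ x ∈ Kj j, Φ f (b j x) = v j x (f x))
    (hΦu : ∀ f : X → Y, ∀ i, ∀ x ∈ V i, Φ f (u i x) = w i x (f x))
    (f : X → Y) (hfb : IsBounded (Set.range f)) (hfix : Φ f = f) :
    {pt : X × Y | pt.2 = f pt.1} =
      (⋃ j, (fun pt : X × Y => (b j pt.1, v j pt.1 pt.2)) ''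
        ({pt : X × Y | pt.2 = f pt.1} ∩ (Kj j) ×ˢ (Set.univ : Set Y))) ∪
      (⋃ i, (fun pt : X × Y => (u i pt.1, w i pt.1 pt.2)) ''
        ({pt : X × Y | pt.2 = f pt.1} ∩ (V i) ×ˢ (Set.univ : Set Y))) :=
  graph_is_local_attractor_general K Kj V b u hKcov hVcov v w Φ hΦb hΦu f hfix
end

section
/- Let {f_k : X_k → X}_{k=1}^N be a local IFS on a set X. Then the union A* of all local attractors of the local IFS is itself a local attractor (A* = ⋃_{k=1}^N f_k(A* ∩ X_k)), and it is the largest local attractor: every local attractor A satisfies A ⊆ A*. -/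
/-! The local attractors are exactly the fixed points of the monotone operator
`A ↦ ⋃ k, f k '' (A ∩ Xk k)` on the complete lattice of subsets of `X`. By Knaster–Tarski the
fixed points have a greatest element, the greatest fixed point, so their union is that
greatest fixed point and is itself a local attractor. -/

open Function Set

theorem OrderHom.sSup_fixedPoints_eq_gfp {α : Type*} [CompleteLattice α] (F : α →o α) :
    sSup (fixedPoints F) = F.gfp :=
  F.isGreatest_gfp.csSup_eq

def localHutchinson {X ι : Type*} (Xk : ι → Set X) (f : ι → X → X) : Set X →o Set X where
  toFun A := ⋃ k, f k '' (A ∩ Xk k)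
  monotone' _ _ hAB := iUnion_mono fun _ => image_mono (inter_subset_inter_left _ hAB)

theorem fixedPoints_localHutchinson {X ι : Type*} (Xk : ι → Set X) (f : ι → X → X) :
    fixedPoints (localHutchinson Xk f) = {A | A = ⋃ k, f k '' (A ∩ Xk k)} :=
  ext fun _ => eq_comm

theorem sUnion_localAttractors_eq_gfp {X ι : Type*} (Xk : ι → Set X) (f : ι → X → X) :
    ⋃₀ {A : Set X | A = ⋃ k, f k '' (A ∩ Xk k)} = (localHutchinson Xk f).gfp := by
  rw [← fixedPoints_localHutchinson, ← OrderHom.sSup_fixedPoints_eq_gfp]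
  rfl

/-- For a local IFS `{f_k : X_k → X}_{k=1}^N` on a set `X`, the union `A*` of
all local attractors is itself a local attractor, and it is the largest one: every local
attractor is contained in `A*`. -/
theorem largest_local_attractor {X : Type*} {N : ℕ}
    (Xk : Fin N → Set X) (f : Fin N → X → X) :
    (⋃₀ {A : Set X | A = ⋃ k, f k '' (A ∩ Xk k)})
        = (⋃ k, f k '' ((⋃₀ {A : Set X | A = ⋃ k, f k '' (A ∩ Xk k)}) ∩ Xk k)) ∧
      ∀ A : Set X, A = (⋃ k, f k '' (A ∩ Xk k)) →
        A ⊆ ⋃₀ {A : Set X | A = ⋃ k, f k '' (A ∩ Xk k)} := by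
  refine ⟨?_, fun A hA => subset_sUnion_of_mem hA⟩
  rw [sUnion_localAttractors_eq_gfp]
  exact (localHutchinson Xk f).map_gfp.symm
end

section
/- Let C_1(ℝ₀⁺) := {v ∈ C([0,∞)) : v(0) = 0 and lim_{x→∞} v(x) = 0}, which consists of bounded functions, and fix g ∈ C_1(ℝ₀⁺) and real numbers s_1, s_2 with |s_1| < 1 and |s_2| < 1. Define Φ on C_1(ℝ₀⁺) by Φh(x) := g(x) + s_1·h(tan(πx/2)) for x ∈ [0,1) and Φh(x) := g(x) + s_2·h(x − 1) for x ∈ [1,∞). Then Φ maps C_1(ℝ₀⁺) into itself, Φ is a contraction with respect to the supremum norm with Lipschitz constant max{|s_1|, |s_2|}, and Φ has a unique fixed point f ∈ C_1(ℝ₀⁺); in particular f is a continuous function on the unbounded domain [0,∞) with f(0) = 0 and f(x) → 0 as x → ∞. -/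
open Filter

private lemma rb_bdd (v : ℝ → ℝ) (hv : ContinuousOn v (Set.Ici 0))
    (hvtop : Tendsto v atTop (nhds 0)) :
    ∃ C : ℝ, 0 ≤ C ∧ ∀ x ∈ Set.Ici (0:ℝ), |v x| ≤ C := by
  obtain ⟨N, hN⟩ := (Metric.tendsto_atTop.mp hvtop) 1 one_pos
  obtain ⟨C, hC⟩ := (isCompact_Icc (a := (0:ℝ)) (b := max N 0)).exists_bound_of_continuousOn
    (hv.mono (fun x hx => hx.1))
  refine ⟨max C 1, le_trans zero_le_one (le_max_right _ _), fun x hx => ?_⟩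
  rcases le_total x (max N 0) with h | h
  · exact le_trans (by simpa [Real.norm_eq_abs] using hC x ⟨hx, h⟩) (le_max_left _ _)
  · have h2 := hN x (le_trans (le_max_left N 0) h)
    rw [Real.dist_eq, sub_zero] at h2
    exact le_trans h2.le (le_max_right _ _)

private lemma rb_tan_nonneg {x : ℝ} (h0 : 0 ≤ x) (h1 : x < 1) :
    0 ≤ Real.tan (Real.pi * x / 2) := by
  apply Real.tan_nonneg_of_nonneg_of_le_pi_div_two
  · positivity
  · nlinarith [Real.pi_pos]

private lemma rb_maps (g : ℝ → ℝ) (s₁ s₂ : ℝ)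
    (hg : ContinuousOn g (Set.Ici 0)) (hg0 : g 0 = 0) (hgtop : Tendsto g atTop (nhds 0))
    (Φ : (ℝ → ℝ) → (ℝ → ℝ))
    (hΦ₁ : ∀ h : ℝ → ℝ, ∀ x : ℝ, 0 ≤ x → x < 1 →
      Φ h x = g x + s₁ * h (Real.tan (Real.pi * x / 2)))
    (hΦ₂ : ∀ h : ℝ → ℝ, ∀ x : ℝ, 1 ≤ x → Φ h x = g x + s₂ * h (x - 1))
    (h : ℝ → ℝ) (hh : ContinuousOn h (Set.Ici 0)) (hh0 : h 0 = 0)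
    (hhtop : Tendsto h atTop (nhds 0)) :
    ContinuousOn (Φ h) (Set.Ici 0) ∧ Φ h 0 = 0 ∧ Tendsto (Φ h) atTop (nhds 0) := by
  have pi_pos := Real.pi_pos
  -- the two branch functions
  have contF₁ : ContinuousOn (fun x => g x + s₁ * h (Real.tan (Real.pi * x / 2)))
      (Set.Ico (0:ℝ) 1) := by
    apply (hg.mono Set.Ico_subset_Ici_self).add
    apply continuousOn_const.mul
    apply hh.comp ?_ (fun x hx => rb_tan_nonneg hx.1 hx.2)
    intro x hx
    apply ContinuousAt.continuousWithinAt
    have hcos : Real.cos (Real.pi * x / 2) ≠ 0 := by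
      apply ne_of_gt
      apply Real.cos_pos_of_mem_Ioo
      constructor
      · nlinarith [hx.1]
      · nlinarith [hx.2]
    have hin : ContinuousAt (fun x : ℝ => Real.pi * x / 2) x :=
      ((continuous_const.mul continuous_id).div_const 2).continuousAt
    exact ContinuousAt.comp (x := x) (g := Real.tan)
      (f := fun x : ℝ => Real.pi * x / 2) (Real.continuousAt_tan.mpr hcos) hin
  have contF₂ : ContinuousOn (fun x => g x + s₂ * h (x - 1)) (Set.Ici (1:ℝ)) := by
    apply (hg.mono (Set.Ici_subset_Ici.mpr zero_le_one)).add
    apply continuousOn_const.mul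
    apply hh.comp (by fun_prop)
    intro x hx
    simp only [Set.mem_Ici] at hx ⊢
    linarith
  refine ⟨?_, ?_, ?_⟩
  · intro a ha
    rcases lt_trichotomy a 1 with hlt | heq | hgt
    · have hmem : Set.Ico (0:ℝ) 1 ∈ nhdsWithin a (Set.Ici 0) := by
        rw [← Set.Ici_inter_Iio]
        exact Filter.inter_mem self_mem_nhdsWithin
          (mem_nhdsWithin_of_mem_nhds (Iio_mem_nhds hlt))
      apply ((contF₁ a ⟨ha, hlt⟩).mono_of_mem_nhdsWithin hmem).congr_of_eventuallyEq
      · filter_upwards [hmem] with x hx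
        exact hΦ₁ h x hx.1 hx.2
      · exact hΦ₁ h a ha hlt
    · subst heq
      have hright : ContinuousWithinAt (Φ h) (Set.Ici 1) 1 :=
        (contF₂ 1 (by norm_num)).congr (fun y hy => hΦ₂ h y hy) (hΦ₂ h 1 le_rfl)
      have hΦh1 : Φ h 1 = g 1 := by
        rw [hΦ₂ h 1 le_rfl]
        simp [hh0]
      have hleft : ContinuousWithinAt (Φ h) (Set.Ico 0 1) 1 := by
        have htan : Tendsto (fun x => Real.tan (Real.pi * x / 2))
            (nhdsWithin 1 (Set.Ico (0:ℝ) 1)) atTop := by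
          apply Real.tendsto_tan_pi_div_two.comp
          rw [tendsto_nhdsWithin_iff]
          constructor
          · have h1 : Tendsto (fun x : ℝ => Real.pi * x / 2) (nhds 1)
                (nhds (Real.pi * 1 / 2)) :=
              ((continuous_const.mul continuous_id).div_const 2).tendsto 1
            simpa using h1.mono_left nhdsWithin_le_nhds
          · filter_upwards [self_mem_nhdsWithin] with x hx
            show Real.pi * x / 2 ∈ Set.Iio (Real.pi / 2)
            simp only [Set.mem_Iio]
            nlinarith [hx.2]
        have hht : Tendsto (fun x => h (Real.tan (Real.pi * x / 2)))
            (nhdsWithin 1 (Set.Ico (0:ℝ) 1)) (nhds 0) := hhtop.comp htan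
        have hgt : Tendsto g (nhdsWithin 1 (Set.Ico (0:ℝ) 1)) (nhds (g 1)) :=
          (hg 1 (by norm_num)).mono_left (nhdsWithin_mono 1 (fun x hx => hx.1))
        have hsum : Tendsto (fun x => g x + s₁ * h (Real.tan (Real.pi * x / 2)))
            (nhdsWithin 1 (Set.Ico (0:ℝ) 1)) (nhds (g 1 + s₁ * 0)) :=
          hgt.add (tendsto_const_nhds.mul hht)
        rw [ContinuousWithinAt, hΦh1]
        refine Tendsto.congr' ?_ (by simpa using hsum)
        filter_upwards [self_mem_nhdsWithin] with x hx
        exact (hΦ₁ h x hx.1 hx.2).symm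
      refine (hleft.union hright).mono fun x hx => ?_
      rcases lt_or_ge x 1 with h1 | h1
      exacts [Or.inl ⟨hx, h1⟩, Or.inr h1]
    · have hmem : Set.Ici (1:ℝ) ∈ nhdsWithin a (Set.Ici 0) :=
        mem_nhdsWithin_of_mem_nhds
          (Filter.mem_of_superset (Ioi_mem_nhds hgt) Set.Ioi_subset_Ici_self)
      apply ((contF₂ a hgt.le).mono_of_mem_nhdsWithin hmem).congr_of_eventuallyEq
      · filter_upwards [hmem] with x hx
        exact hΦ₂ h x hx
      · exact hΦ₂ h a hgt.le
  · rw [hΦ₁ h 0 le_rfl one_pos]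
    simp [hg0, hh0]
  · have hsub : Tendsto (fun x : ℝ => x - 1) atTop atTop := by
      simpa [sub_eq_add_neg] using tendsto_atTop_add_const_right atTop (-1 : ℝ) tendsto_id
    have hsum : Tendsto (fun x => g x + s₂ * h (x - 1)) atTop (nhds (0 + s₂ * 0)) :=
      hgtop.add (tendsto_const_nhds.mul (hhtop.comp hsub))
    refine Tendsto.congr' ?_ (by simpa using hsum)
    filter_upwards [eventually_ge_atTop (1:ℝ)] with x hx
    exact (hΦ₂ h x hx).symm

private lemma rb_abs_sub_le (a b C₁ C₂ : ℝ) (h1 : |a| ≤ C₁) (h2 : |b| ≤ C₂) :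
    |a - b| ≤ C₁ + C₂ :=
  (abs_sub a b).trans (add_le_add h1 h2)

private lemma rb_contract (g : ℝ → ℝ) (s₁ s₂ : ℝ)
    (Φ : (ℝ → ℝ) → (ℝ → ℝ))
    (hΦ₁ : ∀ h : ℝ → ℝ, ∀ x : ℝ, 0 ≤ x → x < 1 →
      Φ h x = g x + s₁ * h (Real.tan (Real.pi * x / 2)))
    (hΦ₂ : ∀ h : ℝ → ℝ, ∀ x : ℝ, 1 ≤ x → Φ h x = g x + s₂ * h (x - 1))
    (h₁ h₂ : ℝ → ℝ)
    (hc1 : ContinuousOn h₁ (Set.Ici 0)) (ht1 : Tendsto h₁ atTop (nhds 0))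
    (hc2 : ContinuousOn h₂ (Set.Ici 0)) (ht2 : Tendsto h₂ atTop (nhds 0)) :
    (⨆ x : Set.Ici (0 : ℝ), |Φ h₁ x - Φ h₂ x|) ≤
      max |s₁| |s₂| * ⨆ x : Set.Ici (0 : ℝ), |h₁ x - h₂ x| := by
  haveI : Nonempty (Set.Ici (0:ℝ)) := ⟨⟨0, Set.self_mem_Ici⟩⟩
  obtain ⟨C₁, _, hC₁⟩ := rb_bdd h₁ hc1 ht1
  obtain ⟨C₂, _, hC₂⟩ := rb_bdd h₂ hc2 ht2
  have hBdd : BddAbove (Set.range fun x : Set.Ici (0:ℝ) => |h₁ x - h₂ x|) := by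
    refine ⟨C₁ + C₂, ?_⟩
    rintro _ ⟨x, rfl⟩
    exact rb_abs_sub_le _ _ _ _ (hC₁ x x.2) (hC₂ x x.2)
  have hM : ∀ t ∈ Set.Ici (0:ℝ),
      |h₁ t - h₂ t| ≤ ⨆ x : Set.Ici (0:ℝ), |h₁ x - h₂ x| :=
    fun t ht => le_ciSup hBdd ⟨t, ht⟩
  apply ciSup_le
  rintro ⟨x, hx⟩
  have hmax1 : |s₁| ≤ max |s₁| |s₂| := le_max_left _ _
  have hmax2 : |s₂| ≤ max |s₁| |s₂| := le_max_right _ _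
  rcases lt_or_ge x 1 with h1 | h1
  · rw [hΦ₁ h₁ x hx h1, hΦ₁ h₂ x hx h1, show
      g x + s₁ * h₁ (Real.tan (Real.pi * x / 2)) -
        (g x + s₁ * h₂ (Real.tan (Real.pi * x / 2))) =
      s₁ * (h₁ (Real.tan (Real.pi * x / 2)) - h₂ (Real.tan (Real.pi * x / 2))) by ring,
      abs_mul]
    exact mul_le_mul hmax1 (hM _ (rb_tan_nonneg hx h1)) (abs_nonneg _)
      (le_trans (abs_nonneg s₁) hmax1)
  · rw [hΦ₂ h₁ x h1, hΦ₂ h₂ x h1, show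
      g x + s₂ * h₁ (x - 1) - (g x + s₂ * h₂ (x - 1)) = s₂ * (h₁ (x-1) - h₂ (x-1)) by ring,
      abs_mul]
    exact mul_le_mul hmax2 (hM _ (by simp only [Set.mem_Ici]; linarith)) (abs_nonneg _)
      (le_trans (abs_nonneg s₁) hmax1)


open ZeroAtInfty in
/-- Let `C₁(ℝ₀⁺)` be the set of continuous functions on `[0,∞)` vanishing at
`0` and at `∞` (all of which are bounded on `[0,∞)`), let `g ∈ C₁(ℝ₀⁺)` and `|s₁|, |s₂| < 1`,
and let `Φ h := g + s₁ (h ∘ tan(π·/2)) χ_{[0,1)} + s₂ h(· − 1) χ_{[1,∞)}`.  Then `Φ` maps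
`C₁(ℝ₀⁺)` into itself, is a contraction for the sup norm on `[0,∞)` with Lipschitz constant
`max{|s₁|, |s₂|}`, and has a unique fixed point `f ∈ C₁(ℝ₀⁺)`: a continuous fractal function
on the unbounded domain `[0,∞)` with `f 0 = 0` and `f x → 0` as `x → ∞`. -/
theorem RB_operator_on_half_line (g : ℝ → ℝ) (s₁ s₂ : ℝ)
    (hg : ContinuousOn g (Set.Ici 0)) (hg0 : g 0 = 0)
    (hgtop : Tendsto g atTop (nhds 0))
    (hs₁ : |s₁| < 1) (hs₂ : |s₂| < 1)
    (Φ : (ℝ → ℝ) → (ℝ → ℝ))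
    (hΦ₁ : ∀ h : ℝ → ℝ, ∀ x : ℝ, 0 ≤ x → x < 1 →
      Φ h x = g x + s₁ * h (Real.tan (Real.pi * x / 2)))
    (hΦ₂ : ∀ h : ℝ → ℝ, ∀ x : ℝ, 1 ≤ x → Φ h x = g x + s₂ * h (x - 1)) :
    -- members of `C₁(ℝ₀⁺)` are bounded on `[0,∞)`
    (∀ v : ℝ → ℝ, ContinuousOn v (Set.Ici 0) → v 0 = 0 → Tendsto v atTop (
      nhds 0) → Bornology.IsBounded (v '' Set.Ici 0)) ∧
    -- `Φ` maps `C₁(ℝ₀⁺)` into itself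
    (∀ h : ℝ → ℝ, ContinuousOn h (Set.Ici 0) → h 0 = 0 → Tendsto h atTop (nhds 0) →
      ContinuousOn (Φ h) (Set.Ici 0) ∧ Φ h 0 = 0 ∧ Tendsto (Φ h) atTop (nhds 0)) ∧
    -- `Φ` is a contraction with Lipschitz constant `max {|s₁|, |s₂|}` in the sup norm
    (∀ h₁ h₂ : ℝ → ℝ,
      ContinuousOn h₁ (Set.Ici 0) → h₁ 0 = 0 → Tendsto h₁ atTop (nhds 0) →
      ContinuousOn h₂ (Set.Ici 0) → h₂ 0 = 0 → Tendsto h₂ atTop (nhds 0) →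
      (⨆ x : Set.Ici (0 : ℝ), |Φ h₁ x - Φ h₂ x|) ≤
        max |s₁| |s₂| * ⨆ x : Set.Ici (0 : ℝ), |h₁ x - h₂ x|) ∧
    -- unique fixed point in `C₁(ℝ₀⁺)`
    (∃ f : ℝ → ℝ, (ContinuousOn f (Set.Ici 0) ∧ f 0 = 0 ∧ Tendsto f atTop (nhds 0)) ∧
      (∀ x ∈ Set.Ici (0 : ℝ), Φ f x = f x) ∧
      ∀ f' : ℝ → ℝ, ContinuousOn f' (Set.Ici 0) → f' 0 = 0 → Tendsto f' atTop (nhds 0) →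
        (∀ x ∈ Set.Ici (0 : ℝ), Φ f' x = f' x) → ∀ x ∈ Set.Ici (0 : ℝ), f' x = f x) := by
  refine ⟨?_, ?_, ?_, ?_⟩
  · intro v hv hv0 hvt
    obtain ⟨C, hC0, hC⟩ := rb_bdd v hv hvt
    apply Bornology.IsBounded.subset (Metric.isBounded_closedBall (x := (0:ℝ)) (r := C))
    rintro _ ⟨x, hx, rfl⟩
    simpa [Metric.mem_closedBall, Real.dist_eq] using hC x hx
  · intro h hh hh0 hht
    exact rb_maps g s₁ s₂ hg hg0 hgtop Φ hΦ₁ hΦ₂ h hh hh0 hht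
  · intro h₁ h₂ hc1 h01 ht1 hc2 h02 ht2
    exact rb_contract g s₁ s₂ Φ hΦ₁ hΦ₂ h₁ h₂ hc1 ht1 hc2 ht2
  ·
    classical
    haveI : Nonempty (Set.Ici (0:ℝ)) := ⟨⟨0, Set.self_mem_Ici⟩⟩
    set S : Set C₀(ℝ, ℝ) := {w | ∀ x ≤ 0, w x = 0} with hS
    have hSclosed : IsClosed S := by
      have hSeq : S = ⋂ x ∈ Set.Iic (0:ℝ), {w : C₀(ℝ, ℝ) | w x = 0} := by
        ext w
        simp [hS, Set.mem_iInter, Set.mem_Iic]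
      rw [hSeq]
      refine isClosed_biInter fun x _ => isClosed_eq ?_ continuous_const
      exact (continuous_eval_const (F := BoundedContinuousFunction ℝ ℝ) x).comp
        ZeroAtInftyContinuousMap.isometry_toBCF.continuous
    haveI := hSclosed.completeSpace_coe
    haveI : Nonempty S := ⟨⟨0, fun x _ => rfl⟩⟩
    -- properties of elements of S
    have hmem : ∀ w : S, ContinuousOn (⇑(w : C₀(ℝ,ℝ))) (Set.Ici 0) ∧
        (w : C₀(ℝ,ℝ)) 0 = 0 ∧ Tendsto (⇑(w : C₀(ℝ,ℝ))) atTop (nhds 0) := fun w =>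
      ⟨(map_continuous (w : C₀(ℝ,ℝ))).continuousOn, w.2 0 le_rfl,
        (zero_at_infty (w : C₀(ℝ,ℝ))).mono_left atTop_le_cocompact⟩
    -- the induced operator on S
    have Tex : ∀ w : S, ∃ w' : S,
        ∀ x : ℝ, (w' : C₀(ℝ,ℝ)) x = Φ (⇑(w : C₀(ℝ,ℝ))) (max x 0) := by
      intro w
      obtain ⟨hcw, h0w, htw⟩ := hmem w
      obtain ⟨hc, h0, ht⟩ := rb_maps g s₁ s₂ hg hg0 hgtop Φ hΦ₁ hΦ₂ _ hcw h0w htw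
      have hcont : Continuous fun x : ℝ => Φ (⇑(w : C₀(ℝ,ℝ))) (max x 0) :=
        hc.comp_continuous (continuous_id.max continuous_const) (fun x => le_max_right x 0)
      have hzero : Tendsto (fun x : ℝ => Φ (⇑(w : C₀(ℝ,ℝ))) (max x 0))
          (cocompact ℝ) (nhds 0) := by
        rw [cocompact_eq_atBot_atTop, Filter.tendsto_sup]
        constructor
        · apply Tendsto.congr'
            (f₁ := fun _ : ℝ => (0:ℝ)) _ tendsto_const_nhds
          filter_upwards [eventually_le_atBot (0:ℝ)] with x hx
          rw [max_eq_right hx, h0]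
        · apply ht.congr'
          filter_upwards [eventually_ge_atTop (0:ℝ)] with x hx
          rw [max_eq_left hx]
      refine ⟨⟨⟨⟨_, hcont⟩, hzero⟩, fun x hx => ?_⟩, fun x => rfl⟩
      show Φ (⇑(w : C₀(ℝ,ℝ))) (max x 0) = 0
      rw [max_eq_right hx, h0]
    choose T hT using Tex
    -- pointwise distance bound
    have hpt : ∀ (w₁ w₂ : S) (t : ℝ),
        |(w₁ : C₀(ℝ,ℝ)) t - (w₂ : C₀(ℝ,ℝ)) t| ≤ dist w₁ w₂ := by
      intro w₁ w₂ t
      rw [Subtype.dist_eq, ← ZeroAtInftyContinuousMap.dist_toBCF_eq_dist, ← Real.dist_eq]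
      exact BoundedContinuousFunction.dist_coe_le_dist
        (f := ((w₁ : C₀(ℝ,ℝ)).toBCF)) (g := ((w₂ : C₀(ℝ,ℝ)).toBCF)) t
    have hKnn : (0:ℝ) ≤ max |s₁| |s₂| := le_trans (abs_nonneg s₁) (le_max_left _ _)
    set K : NNReal := ⟨max |s₁| |s₂|, hKnn⟩ with hKdef
    have hlip : ∀ w₁ w₂ : S, dist (T w₁) (T w₂) ≤ (K : ℝ) * dist w₁ w₂ := by
      intro w₁ w₂
      rw [Subtype.dist_eq, ← ZeroAtInftyContinuousMap.dist_toBCF_eq_dist]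
      refine (BoundedContinuousFunction.dist_le (mul_nonneg hKnn dist_nonneg)).mpr fun x => ?_
      have e1 : (T w₁ : C₀(ℝ,ℝ)).toBCF x = Φ (⇑(w₁ : C₀(ℝ,ℝ))) (max x 0) := hT w₁ x
      have e2 : (T w₂ : C₀(ℝ,ℝ)).toBCF x = Φ (⇑(w₂ : C₀(ℝ,ℝ))) (max x 0) := hT w₂ x
      rw [Real.dist_eq, e1, e2]
      have hy : (0:ℝ) ≤ max x 0 := le_max_right x 0
      have hmax1 : |s₁| ≤ max |s₁| |s₂| := le_max_left _ _
      have hmax2 : |s₂| ≤ max |s₁| |s₂| := le_max_right _ _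
      rcases lt_or_ge (max x 0) 1 with h1 | h1
      · rw [hΦ₁ _ _ hy h1, hΦ₁ _ _ hy h1, show ∀ a b c : ℝ,
          c + s₁ * a - (c + s₁ * b) = s₁ * (a - b) from fun a b c => by ring, abs_mul]
        exact mul_le_mul hmax1 (hpt w₁ w₂ _) (abs_nonneg _) hKnn
      · rw [hΦ₂ _ _ h1, hΦ₂ _ _ h1, show ∀ a b c : ℝ,
          c + s₂ * a - (c + s₂ * b) = s₂ * (a - b) from fun a b c => by ring, abs_mul]
        exact mul_le_mul hmax2 (hpt w₁ w₂ _) (abs_nonneg _) hKnn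
    have hcontr : ContractingWith K T := by
      constructor
      · rw [← NNReal.coe_lt_one]
        exact max_lt hs₁ hs₂
      · exact LipschitzWith.of_dist_le_mul hlip
    set fp := ContractingWith.fixedPoint T hcontr with hfpdef
    have hfp : T fp = fp := hcontr.fixedPoint_isFixedPt
    set f : ℝ → ℝ := ⇑((fp : S) : C₀(ℝ,ℝ)) with hfdef
    obtain ⟨hfc, hf0, hft⟩ := hmem fp
    have hfix : ∀ x ∈ Set.Ici (0:ℝ), Φ f x = f x := by
      intro x hx
      rw [Set.mem_Ici] at hx
      have h1 := hT fp x
      rw [sup_eq_left.mpr hx, hfp] at h1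
      exact h1.symm
    refine ⟨f, ⟨hfc, hf0, hft⟩, hfix, ?_⟩
    intro f' hc' h0' ht' hfix' x hx
    have hsup := rb_contract g s₁ s₂ Φ hΦ₁ hΦ₂ f' f hc' ht' hfc hft
    have hEq : (⨆ t : Set.Ici (0:ℝ), |Φ f' t - Φ f t|) =
        ⨆ t : Set.Ici (0:ℝ), |f' t - f t| :=
      iSup_congr fun t => by rw [hfix' t t.2, hfix t t.2]
    rw [hEq] at hsup
    obtain ⟨C₁, _, hC₁⟩ := rb_bdd f' hc' ht'
    obtain ⟨C₂, _, hC₂⟩ := rb_bdd f hfc hft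
    have hBdd : BddAbove (Set.range fun t : Set.Ici (0:ℝ) => |f' t - f t|) := by
      refine ⟨C₁ + C₂, ?_⟩
      rintro _ ⟨t, rfl⟩
      exact rb_abs_sub_le _ _ _ _ (hC₁ t t.2) (hC₂ t t.2)
    have hxle : |f' x - f x| ≤ ⨆ t : Set.Ici (0:ℝ), |f' t - f t| := le_ciSup hBdd ⟨x, hx⟩
    have hMnn : (0:ℝ) ≤ ⨆ t : Set.Ici (0:ℝ), |f' t - f t| := le_trans (abs_nonneg _) hxle
    have hM0 : (⨆ t : Set.Ici (0:ℝ), |f' t - f t|) ≤ 0 := by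
      by_contra hcon
      push_neg at hcon
      have := mul_lt_mul_of_pos_right (max_lt hs₁ hs₂) hcon
      rw [one_mul] at this
      linarith
    have : |f' x - f x| ≤ 0 := hxle.trans hM0
    have habs : f' x - f x = 0 := abs_eq_zero.mp (le_antisymm this (abs_nonneg _))
    linarith [habs]
end
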